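/- arXiv:2201.13252 — 9 statements merged into one kernel-verified Lean document; each statement's English description precedes it below -/
import Mathlib

section
/- For a generalized composition 𝛂 = α^(1) ⊕ α^(2) ⊕ ⋯ ⊕ α^(p) with p nonempty composition components, the set [𝛂] of all compositions of the form α^(1) □ α^(2) □ ⋯ □ α^(p), where each □ is independently concatenation · or near concatenation ⊙, has exactly 2^{p-1} elements. -/
/-- Near concatenation `α ⊙ β = (α₁,…,α_{k-1}, α_k + β₁, β₂,…,β_l)`. -/
def nearConcat (x y : List ℕ) : List ℕ :=
  x.dropLast ++ (x.getLast! + y.headI) :: y.tail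

/-- Join two compositions by concatenation (`true`) or near concatenation (`false`). -/
def glue (b : Bool) (x y : List ℕ) : List ℕ :=
  if b then x ++ y else nearConcat x y

/-- Combine the components of a generalized composition, the `m`-th pair of adjacent
components being joined according to the `m`-th boolean choice. -/
def combineAll : List ℕ → List Bool → List (List ℕ) → List ℕ
  | acc, _, [] => acc
  | acc, [], _ :: _ => acc
  | acc, b :: bs, l :: ls => combineAll (glue b acc l) bs ls

lemma getLast!_concat' (u : List ℕ) (a : ℕ) : (u ++ [a]).getLast! = a :=
  List.getLast!_of_getLast? (by rw [List.getLast?_concat])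

lemma nearConcat_concat (u : List ℕ) (a : ℕ) (l : List ℕ) :
    nearConcat (u ++ [a]) l = u ++ (a + l.headI) :: l.tail := by
  rw [nearConcat, List.dropLast_concat, getLast!_concat']

lemma combineAll_shape (ls : List (List ℕ)) (bs : List Bool) (u : List ℕ) (a : ℕ) :
    ∃ c rest, combineAll (u ++ [a]) bs ls = u ++ (a + c) :: rest := by
  induction ls generalizing bs u a with
  | nil => exact ⟨0, [], by simp [combineAll]⟩
  | cons l ls ih =>
    cases bs with
    | nil => exact ⟨0, [], by simp [combineAll]⟩
    | cons b bt =>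
      have key : ∃ d m, glue b (u ++ [a]) l = u ++ (a + d) :: m := by
        cases b with
        | true => exact ⟨0, l, by simp [glue]⟩
        | false => exact ⟨l.headI, l.tail, by simp [glue, nearConcat_concat]⟩
      obtain ⟨d, m, hm⟩ := key
      rcases m.eq_nil_or_concat with rfl | ⟨m', z, rfl⟩
      · obtain ⟨c, rest, hc⟩ := ih bt u (a + d)
        refine ⟨d + c, rest, ?_⟩
        show combineAll (glue b (u ++ [a]) l) bt ls = _
        rw [hm]
        simpa [← add_assoc] using hc
      · obtain ⟨c, rest, hc⟩ := ih bt (u ++ (a + d) :: m') z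
        refine ⟨d, m' ++ (z + c) :: rest, ?_⟩
        show combineAll (glue b (u ++ [a]) l) bt ls = _
        rw [hm]
        simp only [List.concat_eq_append, ← List.append_assoc] at *
        simpa using hc

lemma combineAll_decode (ls : List (List ℕ)) (l : List ℕ) (hl : l ≠ []) (hpos : 0 < l.headI)
    (b : Bool) (bt : List Bool) (u : List ℕ) (a : ℕ) :
    ∃ e rest, combineAll (u ++ [a]) (b :: bt) (l :: ls) = u ++ (a + e) :: rest ∧
      (e = 0 ↔ b = true) := by
  show ∃ e rest, combineAll (glue b (u ++ [a]) l) bt ls = _ ∧ _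
  cases b with
  | true =>
    rcases l.eq_nil_or_concat with rfl | ⟨l', z, rfl⟩
    · exact absurd rfl hl
    obtain ⟨c, rest, hc⟩ := combineAll_shape ls bt (u ++ a :: l') z
    refine ⟨0, l' ++ (z + c) :: rest, ?_, by simp⟩
    have : glue true (u ++ [a]) (l'.concat z) = (u ++ a :: l') ++ [z] := by
      simp [glue]
    rw [this, hc]; simp
  | false =>
    have hg : glue false (u ++ [a]) l = u ++ (a + l.headI) :: l.tail := by
      simp [glue, nearConcat_concat]
    rcases l.tail.eq_nil_or_concat with htl | ⟨m', z, htl⟩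
    · obtain ⟨c, rest, hc⟩ := combineAll_shape ls bt u (a + l.headI)
      refine ⟨l.headI + c, rest, ?_, by simp; omega⟩
      rw [hg, htl]
      simpa [← add_assoc] using hc
    · obtain ⟨c, rest, hc⟩ := combineAll_shape ls bt (u ++ (a + l.headI) :: m') z
      refine ⟨l.headI, m' ++ (z + c) :: rest, ?_, by simp; omega⟩
      rw [hg, htl]
      simp only [List.concat_eq_append, ← List.append_assoc] at *
      simpa using hc

lemma glue_ne_nil (b : Bool) (u : List ℕ) (a : ℕ) (l : List ℕ) :
    glue b (u ++ [a]) l ≠ [] := by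
  cases b <;> simp [glue, nearConcat_concat]

lemma combineAll_inj (ls : List (List ℕ)) (hls : ∀ l ∈ ls, l ≠ [] ∧ ∀ x ∈ l, 0 < x)
    (bs bs' : List Bool) (u : List ℕ) (a : ℕ)
    (h1 : bs.length = ls.length) (h2 : bs'.length = ls.length)
    (heq : combineAll (u ++ [a]) bs ls = combineAll (u ++ [a]) bs' ls) : bs = bs' := by
  induction ls generalizing bs bs' u a with
  | nil =>
    simp only [List.length_nil, List.length_eq_zero_iff] at h1 h2; rw [h1, h2]
  | cons l ls ih =>
    cases bs with
    | nil => simp at h1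
    | cons b bt =>
    cases bs' with
    | nil => simp at h2
    | cons b' bt' =>
      obtain ⟨hl, hlp⟩ := hls l (by simp)
      have hh : 0 < l.headI := by
        cases l with
        | nil => exact absurd rfl hl
        | cons x xs => exact hlp x (by simp)
      obtain ⟨e, rest, he, hbe⟩ := combineAll_decode ls l hl hh b bt u a
      obtain ⟨e', rest', he', hbe'⟩ := combineAll_decode ls l hl hh b' bt' u a
      have hee : e = e' := by
        have := he ▸ he' ▸ heq
        have h3 := List.append_cancel_left this
        injection h3 with h4 h5
        omega
      have hbb : b = b' := by
        cases b <;> cases b' <;> simp_all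
      subst hbb
      have heq2 : combineAll (glue b (u ++ [a]) l) bt ls
          = combineAll (glue b (u ++ [a]) l) bt' ls := heq
      rcases (glue b (u ++ [a]) l).eq_nil_or_concat with hg | ⟨u'', a'', hg⟩
      · exact absurd hg (glue_ne_nil b u a l)
      rw [hg] at heq2
      have := ih (fun l hl => hls l (by simp [hl])) bt bt' u'' a''
        (by simpa using h1) (by simpa using h2) (by simpa using heq2)
      rw [this]

/-- for a generalized composition with `p = L.length + 1` nonempty
components, the set `[𝛂]` of compositions obtained by joining consecutive components
by `·` or `⊙` has exactly `2^(p-1)` elements. -/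
theorem stmt4 (l₀ : List ℕ) (L : List (List ℕ))
    (h₀ : l₀ ≠ [] ∧ ∀ x ∈ l₀, 0 < x)
    (hL : ∀ l ∈ L, l ≠ [] ∧ ∀ x ∈ l, 0 < x) :
    {γ : List ℕ | ∃ bs : List Bool, bs.length = L.length ∧ γ = combineAll l₀ bs L}.ncard
      = 2 ^ L.length := by
  obtain ⟨hne, -⟩ := h₀
  rcases l₀.eq_nil_or_concat with rfl | ⟨u, a, rfl⟩
  · exact absurd rfl hne
  have himg : {γ : List ℕ | ∃ bs : List Bool, bs.length = L.length ∧ γ = combineAll (u ++ [a]) bs L}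
      = (fun bs => combineAll (u ++ [a]) bs L) '' {bs : List Bool | bs.length = L.length} := by
    ext γ
    simp only [Set.mem_setOf_eq, Set.mem_image]
    constructor
    · rintro ⟨bs, h, rfl⟩; exact ⟨bs, h, rfl⟩
    · rintro ⟨bs, h, rfl⟩; exact ⟨bs, h, rfl⟩
  rw [List.concat_eq_append]
  rw [himg, Set.ncard_image_of_injOn]
  · have : {bs : List Bool | bs.length = L.length}.ncard
        = Nat.card (List.Vector Bool L.length) := by
      rw [← Nat.card_coe_set_eq]
      exact Nat.card_congr (Equiv.subtypeEquivRight (by intro x; rfl))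
    rw [this]
    simp [Nat.card_eq_fintype_card, card_vector]
  · intro bs h1 bs' h2 heq
    exact combineAll_inj L hL bs bs' u a h1 h2 heq
end

section
/- Let α be a composition of n with parts α₁,...,α_ℓ, and for i with 1 ≤ i ≤ ℓ−1 and α_{i+1} ≠ 1, let β^{(1)}(i) = (α₁,...,α_{i-1}, α_i+1, α_{i+1}−1, α_{i+2},...,α_ℓ) and β^{(2)}(i) = (α₁,...,α_{i-1}, α_i+1, α_{i+1}−1+α_{i+2}, α_{i+3},...,α_ℓ) (when i = ℓ−1 only β^{(1)}(i) is defined). Then for indices i < j in I(α) := {1 ≤ i ≤ ℓ−1 : α_{i+1} ≠ 1}, the sets {β^{(1)}(i), β^{(2)}(i)} and {β^{(1)}(j), β^{(2)}(j)} are disjoint, and β^{(1)}(i) ≠ β^{(2)}(i). -/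
/-- A composition of `n`: a list of positive integers summing to `n`. -/
def IsComposition (n : ℕ) (l : List ℕ) : Prop :=
  (∀ x ∈ l, 0 < x) ∧ l.sum = n

/-- `β⁽¹⁾(i) = (α₁,…,α_{i-1}, α_i + 1, α_{i+1} − 1, α_{i+2},…,α_ℓ)` (1-based `i`). -/
def beta1 (α : List ℕ) (i : ℕ) : List ℕ :=
  α.take (i - 1) ++ [α.getD (i - 1) 0 + 1, α.getD i 0 - 1] ++ α.drop (i + 1)

/-- `β⁽²⁾(i) = (α₁,…,α_{i-1}, α_i + 1, α_{i+1} − 1 + α_{i+2}, α_{i+3},…,α_ℓ)` (1-based `i`). -/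
def beta2 (α : List ℕ) (i : ℕ) : List ℕ :=
  α.take (i - 1) ++ [α.getD (i - 1) 0 + 1, α.getD i 0 - 1 + α.getD (i + 1) 0] ++ α.drop (i + 2)

/-- The set `{β⁽¹⁾(i), β⁽²⁾(i)}`, where only `β⁽¹⁾(i)` is defined when `i = ℓ−1`. -/
def Bset (α : List ℕ) (i : ℕ) : Set (List ℕ) :=
  if i = α.length - 1 then {beta1 α i} else {beta1 α i, beta2 α i}

lemma getD_take_lt (l : List ℕ) (m k : ℕ) (h : k < m) : (l.take m).getD k 0 = l.getD k 0 := by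
  simp [List.getD_eq_getElem?_getD, List.getElem?_take, h]

lemma beta1_length (α : List ℕ) (i : ℕ) (h1 : 1 ≤ i) (h2 : i + 1 ≤ α.length) :
    (beta1 α i).length = α.length := by
  simp [beta1]; omega

lemma beta2_length (α : List ℕ) (i : ℕ) (h1 : 1 ≤ i) (h2 : i + 2 ≤ α.length) :
    (beta2 α i).length = α.length - 1 := by
  simp [beta2]; omega

lemma beta1_getD_lt (α : List ℕ) (i k : ℕ) (hk : k < i - 1) (hk2 : k < α.length) :
    (beta1 α i).getD k 0 = (α.take (i-1)).getD k 0 := by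
  rw [beta1, List.append_assoc, List.getD_append]
  simp; omega

lemma beta2_getD_lt (α : List ℕ) (i k : ℕ) (hk : k < i - 1) (hk2 : k < α.length) :
    (beta2 α i).getD k 0 = (α.take (i-1)).getD k 0 := by
  rw [beta2, List.append_assoc, List.getD_append]
  simp; omega

lemma beta1_getD_self (α : List ℕ) (i : ℕ) (h2 : i - 1 ≤ α.length) :
    (beta1 α i).getD (i-1) 0 = α.getD (i-1) 0 + 1 := by
  rw [beta1, List.append_assoc, List.getD_append_right]
  all_goals simp [List.length_take, Nat.min_eq_left h2]

lemma beta2_getD_self (α : List ℕ) (i : ℕ) (h2 : i - 1 ≤ α.length) :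
    (beta2 α i).getD (i-1) 0 = α.getD (i-1) 0 + 1 := by
  rw [beta2, List.append_assoc, List.getD_append_right]
  all_goals simp [List.length_take, Nat.min_eq_left h2]

lemma beta1_ne_beta1 (α : List ℕ) (i j : ℕ) (h1 : 1 ≤ i) (hij : i < j) (hj : j ≤ α.length) :
    beta1 α i ≠ beta1 α j := by
  intro h
  have : (beta1 α i).getD (i-1) 0 = (beta1 α j).getD (i-1) 0 := by rw [h]
  rw [beta1_getD_self α i (by omega), beta1_getD_lt α j (i-1) (by omega) (by omega),
    getD_take_lt α (j-1) (i-1) (by omega)] at this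
  omega

lemma beta2_ne_beta2 (α : List ℕ) (i j : ℕ) (h1 : 1 ≤ i) (hij : i < j) (hj : j ≤ α.length) :
    beta2 α i ≠ beta2 α j := by
  intro h
  have : (beta2 α i).getD (i-1) 0 = (beta2 α j).getD (i-1) 0 := by rw [h]
  rw [beta2_getD_self α i (by omega), beta2_getD_lt α j (i-1) (by omega) (by omega),
    getD_take_lt α (j-1) (i-1) (by omega)] at this
  omega

lemma beta1_ne_beta2 (α : List ℕ) (i j : ℕ) (h1 : 1 ≤ i) (h2 : i + 1 ≤ α.length)
    (h3 : 1 ≤ j) (h4 : j + 2 ≤ α.length) : beta1 α i ≠ beta2 α j := by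
  intro h
  have := congrArg List.length h
  rw [beta1_length α i h1 h2, beta2_length α j h3 h4] at this
  omega

/-- for `i < j` in `I(α) = {1 ≤ i ≤ ℓ−1 : α_{i+1} ≠ 1}`, the sets
`{β⁽¹⁾(i), β⁽²⁾(i)}` and `{β⁽¹⁾(j), β⁽²⁾(j)}` are disjoint, and `β⁽¹⁾(i) ≠ β⁽²⁾(i)`
(whenever both are defined).  Here `α.getD i 0 = α_{i+1}` with 1-based parts. -/
theorem stmt5 (n : ℕ) (α : List ℕ) (hα : IsComposition n α) (hlen : 2 ≤ α.length) :
    (∀ i j : ℕ,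
      (1 ≤ i ∧ i ≤ α.length - 1 ∧ α.getD i 0 ≠ 1) →
      (1 ≤ j ∧ j ≤ α.length - 1 ∧ α.getD j 0 ≠ 1) →
      i < j → Disjoint (Bset α i) (Bset α j)) ∧
    (∀ i : ℕ, (1 ≤ i ∧ i ≤ α.length - 1 ∧ α.getD i 0 ≠ 1) → i < α.length - 1 →
      beta1 α i ≠ beta2 α i) := by

  constructor
  · intro i j ⟨hi1, hi2, _⟩ ⟨hj1, hj2, _⟩ hij
    rw [Set.disjoint_left]
    have hiL : i ≠ α.length - 1 := by omega
    intro a ha hb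
    rw [Bset, if_neg hiL] at ha
    rw [Bset] at hb
    by_cases hjL : j = α.length - 1
    · rw [if_pos hjL] at hb
      rcases ha with ha | ha <;> subst ha <;> rw [Set.mem_singleton_iff] at hb
      · exact beta1_ne_beta1 α i j hi1 hij (by omega) hb
      · exact (beta1_ne_beta2 α j i hj1 (by omega) hi1 (by omega)) hb.symm
    · rw [if_neg hjL] at hb
      rcases ha with ha | ha <;> subst ha <;> rcases hb with hb | hb
      · exact beta1_ne_beta1 α i j hi1 hij (by omega) hb
      · exact beta1_ne_beta2 α i j hi1 (by omega) hj1 (by omega) hb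
      · exact (beta1_ne_beta2 α j i hj1 (by omega) hi1 (by omega)) hb.symm
      · exact beta2_ne_beta2 α i j hi1 hij (by omega) hb
  · intro i ⟨hi1, hi2, _⟩ hlt
    exact beta1_ne_beta2 α i i hi1 (by omega) hi1 (by omega)
end

section
/- Every composition β in 𝒥(α) := ⋃_{i ∈ I(α)} [𝛂^{(i)}] is strictly greater than α in the lexicographic order on compositions, where 𝛂^{(i)} = (α₁,...,α_{i-1}, α_i+1, α_{i+1}−1) ⊕ (α_{i+2},...,α_{ℓ(α)}). -/
private lemma lex_append {a b : ℕ} (h : a < b) :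
    ∀ (l s t : List ℕ), List.Lex (· < ·) (l ++ a :: s) (l ++ b :: t) := by
  intro l
  induction l with
  | nil => intro s t; exact List.Lex.rel h
  | cons x xs ih => intro s t; exact List.Lex.cons (ih s t)

private lemma alpha_eq (α : List ℕ) (k : ℕ) (hk : k < α.length) :
    α = α.take k ++ α.getD k 0 :: α.drop (k + 1) := by
  rw [List.getD_eq_getElem α 0 hk, ← List.drop_eq_getElem_cons hk, List.take_append_drop]

/-- every composition `β ∈ 𝒥(α) = ⋃_{i ∈ I(α)} [𝛂⁽ⁱ⁾]` is strictly
greater than `α` in the lexicographic order, i.e. `α <_l β`. -/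
theorem stmt6 (n : ℕ) (α : List ℕ) (hα : IsComposition n α) (hlen : 2 ≤ α.length) :
    ∀ i : ℕ, 1 ≤ i → i ≤ α.length - 1 → α.getD i 0 ≠ 1 →
      ∀ β ∈ Bset α i, List.Lex (· < ·) α β := by
  intro i hi1 hi2 _ β hβ
  have hk : i - 1 < α.length := by omega
  have key : ∀ t : List ℕ,
      List.Lex (· < ·) α (α.take (i - 1) ++ (α.getD (i - 1) 0 + 1) :: t) := by
    intro t
    conv_lhs => rw [alpha_eq α (i - 1) hk]
    exact lex_append (Nat.lt_succ_self _) _ _ _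
  have hb1 : List.Lex (· < ·) α (beta1 α i) := by
    have := key ((α.getD i 0 - 1) :: α.drop (i + 1))
    simpa [beta1] using this
  have hb2 : List.Lex (· < ·) α (beta2 α i) := by
    have := key ((α.getD i 0 - 1 + α.getD (i + 1) 0) :: α.drop (i + 2))
    simpa [beta2] using this
  unfold Bset at hβ
  split at hβ
  · simp only [Set.mem_singleton_iff] at hβ; subst hβ; exact hb1
  · rcases hβ with h | h <;> subst h
    · exact hb1
    · exact hb2
end

section
/- Let σ, ρ be elements of the symmetric group S_n and let i ∈ {1,...,n-1} be such that s_i is a right descent of both σ and ρ (i.e., ℓ(σ s_i) < ℓ(σ) and ℓ(ρ s_i) < ℓ(ρ)). Then σ ≤_L ρ in the left weak Bruhat order if and only if σ s_i ≤_L ρ s_i. -/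
/-- The simple transposition `s_i = (i, i+1)` (as a permutation of `ℕ`). -/
def sTr (i : ℕ) : Equiv.Perm ℕ := Equiv.swap i (i + 1)

/-- The symmetric group `S_n`, realized as the subgroup of `Equiv.Perm ℕ`
generated by `s_1, …, s_{n-1}`. -/
def Sn (n : ℕ) : Subgroup (Equiv.Perm ℕ) :=
  Subgroup.closure {π | ∃ i : ℕ, 1 ≤ i ∧ i + 1 ≤ n ∧ π = sTr i}

/-- The Coxeter length: the minimal number of simple transpositions
`s_1, …, s_{n-1}` needed to express `σ`. -/
noncomputable def len (n : ℕ) (σ : Equiv.Perm ℕ) : ℕ :=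
  sInf {k | ∃ w : List ℕ, w.length = k ∧ (∀ i ∈ w, 1 ≤ i ∧ i + 1 ≤ n) ∧
    (w.map sTr).prod = σ}

/-- The left weak Bruhat order, generated by the covering relation
`σ ⋖ s_i σ` whenever `ℓ(s_i σ) = ℓ(σ) + 1`. -/
def leftWeakLe (n : ℕ) : Equiv.Perm ℕ → Equiv.Perm ℕ → Prop :=
  Relation.ReflTransGen (fun σ τ =>
    ∃ i : ℕ, 1 ≤ i ∧ i + 1 ≤ n ∧ τ = sTr i * σ ∧ len n τ = len n σ + 1)

lemma sTr_inv (i : ℕ) : (sTr i)⁻¹ = sTr i := by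
  simp [sTr]

lemma sTr_mul_self (i : ℕ) : sTr i * sTr i = 1 := by
  simp [sTr]

lemma word_prod_inv (w : List ℕ) :
    ((w.map sTr).prod)⁻¹ = (w.reverse.map sTr).prod := by
  induction w with
  | nil => simp
  | cons a t ih => simp [ih, sTr_inv]

lemma word_mem_Sn {n : ℕ} {w : List ℕ} (hv : ∀ i ∈ w, 1 ≤ i ∧ i + 1 ≤ n) :
    (w.map sTr).prod ∈ Sn n := by
  induction w with
  | nil => exact one_mem _
  | cons a t ih =>
    simp only [List.map_cons, List.prod_cons]
    exact mul_mem (Subgroup.subset_closure ⟨a, (hv a (by simp)).1, (hv a (by simp)).2, rfl⟩)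
      (ih fun i hi => hv i (by simp [hi]))

lemma mem_Sn_iff {n : ℕ} {σ : Equiv.Perm ℕ} :
    σ ∈ Sn n ↔ ∃ w : List ℕ, (∀ i ∈ w, 1 ≤ i ∧ i + 1 ≤ n) ∧ (w.map sTr).prod = σ := by
  constructor
  · intro h
    induction h using Subgroup.closure_induction with
    | mem x hx =>
      obtain ⟨i, hi1, hi2, rfl⟩ := hx
      exact ⟨[i], by simpa using ⟨hi1, hi2⟩, by simp⟩
    | one => exact ⟨[], by simp, by simp⟩
    | mul x y hx hy ihx ihy =>
      obtain ⟨w1, hv1, hp1⟩ := ihx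
      obtain ⟨w2, hv2, hp2⟩ := ihy
      refine ⟨w1 ++ w2, ?_, by simp [hp1, hp2]⟩
      intro i hi
      rcases List.mem_append.mp hi with h | h
      · exact hv1 i h
      · exact hv2 i h
    | inv x hx ihx =>
      obtain ⟨w, hv, hp⟩ := ihx
      exact ⟨w.reverse, fun i hi => hv i (List.mem_reverse.mp hi),
        by rw [← word_prod_inv, hp]⟩
  · rintro ⟨w, hv, rfl⟩
    exact word_mem_Sn hv

lemma len_le_word {n : ℕ} {σ : Equiv.Perm ℕ} {w : List ℕ}
    (hv : ∀ i ∈ w, 1 ≤ i ∧ i + 1 ≤ n) (hp : (w.map sTr).prod = σ) :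
    len n σ ≤ w.length :=
  Nat.sInf_le ⟨w, rfl, hv, hp⟩

lemma len_one (n : ℕ) : len n 1 = 0 :=
  Nat.le_zero.mp (len_le_word (w := []) (by simp) (by simp))

lemma exists_word {n : ℕ} {σ : Equiv.Perm ℕ} (h : σ ∈ Sn n) :
    ∃ w : List ℕ, w.length = len n σ ∧ (∀ i ∈ w, 1 ≤ i ∧ i + 1 ≤ n) ∧
      (w.map sTr).prod = σ := by
  obtain ⟨w, hv, hp⟩ := mem_Sn_iff.mp h
  have hne : {k | ∃ w : List ℕ, w.length = k ∧ (∀ i ∈ w, 1 ≤ i ∧ i + 1 ≤ n) ∧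
      (w.map sTr).prod = σ}.Nonempty := ⟨w.length, w, rfl, hv, hp⟩
  exact Nat.sInf_mem hne

lemma len_mul_le {n : ℕ} {σ τ : Equiv.Perm ℕ} (hσ : σ ∈ Sn n) (hτ : τ ∈ Sn n) :
    len n (σ * τ) ≤ len n σ + len n τ := by
  obtain ⟨w1, hl1, hv1, hp1⟩ := exists_word hσ
  obtain ⟨w2, hl2, hv2, hp2⟩ := exists_word hτ
  calc len n (σ * τ) ≤ (w1 ++ w2).length := by
        refine len_le_word ?_ (by simp [hp1, hp2])
        intro i hi
        rcases List.mem_append.mp hi with h | h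
        · exact hv1 i h
        · exact hv2 i h
    _ = len n σ + len n τ := by simp [hl1, hl2]

lemma len_sTr_le {n i : ℕ} (hi1 : 1 ≤ i) (hi2 : i + 1 ≤ n) : len n (sTr i) ≤ 1 :=
  len_le_word (w := [i]) (by simpa using ⟨hi1, hi2⟩) (by simp)

lemma sTr_mem {n i : ℕ} (hi1 : 1 ≤ i) (hi2 : i + 1 ≤ n) : sTr i ∈ Sn n :=
  Subgroup.subset_closure ⟨i, hi1, hi2, rfl⟩

/-- key lemma: σ ≤_L ρ iff lengths are additive. -/
lemma char_fwd {n : ℕ} {σ ρ : Equiv.Perm ℕ} (hσ : σ ∈ Sn n)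
    (h : leftWeakLe n σ ρ) : ρ ∈ Sn n ∧ len n ρ = len n (ρ * σ⁻¹) + len n σ := by
  induction h with
  | refl =>
    refine ⟨hσ, ?_⟩
    simp [len_one]
  | tail hst step ih =>
    rename_i τ ρ'
    obtain ⟨j, hj1, hj2, rfl, hlen⟩ := step
    obtain ⟨hτ, ihlen⟩ := ih
    have hsj := sTr_mem hj1 hj2
    have hmem : sTr j * τ ∈ Sn n := mul_mem hsj hτ
    refine ⟨hmem, ?_⟩
    have hrw : sTr j * τ * σ⁻¹ = sTr j * (τ * σ⁻¹) := by group
    have h1 : len n (sTr j * τ * σ⁻¹) ≤ len n (τ * σ⁻¹) + 1 := by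
      rw [hrw]
      calc len n (sTr j * (τ * σ⁻¹)) ≤ len n (sTr j) + len n (τ * σ⁻¹) :=
            len_mul_le hsj (mul_mem hτ (inv_mem hσ))
        _ ≤ len n (τ * σ⁻¹) + 1 := by
            have := len_sTr_le (n := n) hj1 hj2; omega
    have h2 : len n (sTr j * τ) ≤ len n (sTr j * τ * σ⁻¹) + len n σ := by
      have h := len_mul_le (mul_mem hmem (inv_mem hσ)) hσ
      have e : sTr j * τ * σ⁻¹ * σ = sTr j * τ := by group
      rwa [e] at h
    omega

lemma char_bwd {n : ℕ} : ∀ k : ℕ, ∀ σ ρ : Equiv.Perm ℕ, σ ∈ Sn n → ρ ∈ Sn n →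
    len n (ρ * σ⁻¹) = k → len n ρ = k + len n σ → leftWeakLe n σ ρ := by
  intro k
  induction k with
  | zero =>
    intro σ ρ hσ hρ hk _
    obtain ⟨w, hl, hv, hp⟩ := exists_word (mul_mem hρ (inv_mem hσ))
    rw [hk] at hl
    have : w = [] := List.length_eq_zero_iff.mp hl
    subst this
    simp at hp
    have hps : ρ = σ := by
      have h' := hp.symm
      rwa [mul_inv_eq_one] at h'
    rw [hps]
    exact Relation.ReflTransGen.refl
  | succ k ih =>
    intro σ ρ hσ hρ hk hlen
    obtain ⟨w, hl, hv, hp⟩ := exists_word (mul_mem hρ (inv_mem hσ))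
    rw [hk] at hl
    obtain ⟨j, w', rfl⟩ : ∃ j w', w = j :: w' := by
      cases w with
      | nil => simp at hl
      | cons a t => exact ⟨a, t, rfl⟩
    have hj : 1 ≤ j ∧ j + 1 ≤ n := hv j (by simp)
    have hv' : ∀ i ∈ w', 1 ≤ i ∧ i + 1 ≤ n := fun i hi => hv i (by simp [hi])
    have hl' : w'.length = k := by simpa using hl
    set τ : Equiv.Perm ℕ := (w'.map sTr).prod * σ with hτdef
    have hτmem : τ ∈ Sn n := mul_mem (word_mem_Sn hv') hσ
    have hρτ : ρ = sTr j * τ := by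
      have h' : sTr j * (w'.map sTr).prod = ρ * σ⁻¹ := by simpa using hp
      have h'' : ρ * σ⁻¹ * σ = ρ := by group
      rw [hτdef, ← mul_assoc, h', h'']
    have hτσ : τ * σ⁻¹ = (w'.map sTr).prod := by rw [hτdef]; group
    -- length bounds
    have hτle : len n τ ≤ k + len n σ := by
      calc len n τ ≤ len n ((w'.map sTr).prod) + len n σ :=
            len_mul_le (word_mem_Sn hv') hσ
        _ ≤ k + len n σ := by
            have := len_le_word hv' (rfl : (w'.map sTr).prod = _)
            omega
    have hρle : len n ρ ≤ len n τ + 1 := by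
      rw [hρτ]
      have := len_mul_le (sTr_mem hj.1 hj.2) hτmem
      have := len_sTr_le (n := n) hj.1 hj.2
      omega
    have hτeq : len n τ = k + len n σ := by omega
    have hτσle : len n (τ * σ⁻¹) ≤ k := by
      rw [hτσ]
      have := len_le_word hv' (rfl : (w'.map sTr).prod = _)
      omega
    have hτσge : len n τ ≤ len n (τ * σ⁻¹) + len n σ := by
      have h : τ = (τ * σ⁻¹) * σ := by group
      nth_rewrite 1 [h]
      exact len_mul_le (mul_mem hτmem (inv_mem hσ)) hσ
    have hτσeq : len n (τ * σ⁻¹) = k := by omega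
    have hστ : leftWeakLe n σ τ := ih σ τ hσ hτmem hτσeq hτeq
    exact Relation.ReflTransGen.tail hστ ⟨j, hj.1, hj.2, hρτ, by omega⟩

lemma char {n : ℕ} {σ ρ : Equiv.Perm ℕ} (hσ : σ ∈ Sn n) (hρ : ρ ∈ Sn n) :
    leftWeakLe n σ ρ ↔ len n ρ = len n (ρ * σ⁻¹) + len n σ := by
  constructor
  · exact fun h => (char_fwd hσ h).2
  · exact fun h => char_bwd _ σ ρ hσ hρ rfl h

/-- if `s_i` is a right descent of both `σ` and `ρ`, then
`σ ≤_L ρ` iff `σ s_i ≤_L ρ s_i`. -/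
theorem stmt7 (n : ℕ) (σ ρ : Equiv.Perm ℕ) (hσ : σ ∈ Sn n) (hρ : ρ ∈ Sn n)
    (i : ℕ) (hi1 : 1 ≤ i) (hi2 : i + 1 ≤ n)
    (h1 : len n (σ * sTr i) < len n σ) (h2 : len n (ρ * sTr i) < len n ρ) :
    leftWeakLe n σ ρ ↔ leftWeakLe n (σ * sTr i) (ρ * sTr i) := by
  have hs := sTr_mem (n := n) hi1 hi2
  have hσs : σ * sTr i ∈ Sn n := mul_mem hσ hs
  have hρs : ρ * sTr i ∈ Sn n := mul_mem hρ hs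
  have hsl := len_sTr_le (n := n) hi1 hi2
  have hσeq : len n σ = len n (σ * sTr i) + 1 := by
    have h : σ = (σ * sTr i) * sTr i := by rw [mul_assoc, sTr_mul_self, mul_one]
    have hle : len n σ ≤ len n (σ * sTr i) + 1 := by
      calc len n σ = len n ((σ * sTr i) * sTr i) := by rw [← h]
        _ ≤ len n (σ * sTr i) + len n (sTr i) := len_mul_le hσs hs
        _ ≤ len n (σ * sTr i) + 1 := by omega
    omega
  have hρeq : len n ρ = len n (ρ * sTr i) + 1 := by
    have h : ρ = (ρ * sTr i) * sTr i := by rw [mul_assoc, sTr_mul_self, mul_one]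
    have hle : len n ρ ≤ len n (ρ * sTr i) + 1 := by
      calc len n ρ = len n ((ρ * sTr i) * sTr i) := by rw [← h]
        _ ≤ len n (ρ * sTr i) + len n (sTr i) := len_mul_le hρs hs
        _ ≤ len n (ρ * sTr i) + 1 := by omega
    omega
  rw [char hσ hρ, char hσs hρs]
  have he : (ρ * sTr i) * (σ * sTr i)⁻¹ = ρ * σ⁻¹ := by
    rw [mul_inv_rev, sTr_inv,
      show ρ * sTr i * (sTr i * σ⁻¹) = ρ * (sTr i * sTr i) * σ⁻¹ from by group,
      sTr_mul_self, mul_one]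
  rw [he]
  omega
end

section
/- For any σ, ρ ∈ S_n, the product π_σ · π̄_ρ in the 0-Hecke algebra H_n(0) is nonzero if and only if ℓ(σρ) = ℓ(σ) + ℓ(ρ), where π̄_i := π_i − 1 and π̄_ρ is defined via any reduced expression of ρ. -/
/-- Index set `{1, …, n-1}` for the generators of `H_n(0)` and for the simple
transpositions of `S_n`. -/
def HIdx (n : ℕ) := {i : ℕ // 1 ≤ i ∧ i + 1 ≤ n}

/-- The defining relations of the 0-Hecke algebra `H_n(0)`:
`π_i² = π_i`, the braid relations, and commutation for `|i-j| ≥ 2`. -/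
inductive HeckeRel (n : ℕ) :
    FreeAlgebra ℂ (HIdx n) → FreeAlgebra ℂ (HIdx n) → Prop
  | idem (i : HIdx n) :
      HeckeRel n (FreeAlgebra.ι ℂ i * FreeAlgebra.ι ℂ i) (FreeAlgebra.ι ℂ i)
  | braid (i j : HIdx n) (h : i.1 + 1 = j.1) :
      HeckeRel n (FreeAlgebra.ι ℂ i * FreeAlgebra.ι ℂ j * FreeAlgebra.ι ℂ i)
        (FreeAlgebra.ι ℂ j * FreeAlgebra.ι ℂ i * FreeAlgebra.ι ℂ j)
  | comm (i j : HIdx n) (h : i.1 + 2 ≤ j.1) :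
      HeckeRel n (FreeAlgebra.ι ℂ i * FreeAlgebra.ι ℂ j)
        (FreeAlgebra.ι ℂ j * FreeAlgebra.ι ℂ i)

/-- The 0-Hecke algebra `H_n(0)`, presented by generators and relations. -/
abbrev Hecke0 (n : ℕ) := RingQuot (HeckeRel n)

/-- The generator `π_i` of `H_n(0)`. -/
def piGen (n : ℕ) (i : HIdx n) : Hecke0 n :=
  RingQuot.mkAlgHom ℂ (HeckeRel n) (FreeAlgebra.ι ℂ i)

/-- The permutation `s_{i₁} s_{i₂} ⋯ s_{i_p}` associated to a word, where
`s_i = (i, i+1)` acts on `ℕ`. -/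
def wordPerm (n : ℕ) (w : List (HIdx n)) : Equiv.Perm ℕ :=
  (w.map fun i => Equiv.swap i.1 (i.1 + 1)).prod

/-- `w` is a reduced expression for `σ`: it represents `σ` and has minimal length. -/
def IsRedWord (n : ℕ) (σ : Equiv.Perm ℕ) (w : List (HIdx n)) : Prop :=
  wordPerm n w = σ ∧ ∀ w' : List (HIdx n), wordPerm n w' = σ → w.length ≤ w'.length


/-- The element `π̄_i = π_i − 1` of `H_n(0)`. -/
def piBar (n : ℕ) (i : HIdx n) : Hecke0 n := piGen n i - 1

/-!
Lengths are inversion counts on `{1, …, n}`. By Matsumoto's theorem `π_σ` does not depend on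
the reduced word, and `π_σ π_i` is `π_{σ s_i}` or `π_σ` according as `s_i` lengthens `σ` or
not; hence `π_σ π̄_i` is `π_{σ s_i} - π_σ` or `0`. Peeling off the first letter of `ρ`, this
shows by induction that `π_σ π̄_ρ = 0` when `ℓ(σρ) < ℓ(σ) + ℓ(ρ)`; the inductive step needs the
inversion-set criterion for `ℓ(σρ) = ℓ(σ) + ℓ(ρ)`.

Conversely, `H_n(0)` acts on `ℂ[S_n]` by `π_i e_σ = e_{s_i σ}` if `ℓ(s_i σ) > ℓ(σ)` and
`π_i e_σ = e_σ` otherwise. Then `π̄_ρ e_1 = e_ρ + (terms of length < ℓ(ρ))`, `π_σ e_ρ = e_{σρ}`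
when lengths add, and `π_σ` raises lengths by at most `ℓ(σ)`; so `e_{σρ}` has coefficient `1`
in `π_σ π̄_ρ e_1`.
-/

section PermLength

open Equiv Finset

variable {n : ℕ}

def symGroup (n : ℕ) : Subgroup (Perm ℕ) :=
  fixingSubgroup (Perm ℕ) (↑(Icc 1 n) : Set ℕ)ᶜ

lemma mem_symGroup {σ : Perm ℕ} : σ ∈ symGroup n ↔ ∀ x ∉ Icc 1 n, σ x = x := by
  simp [symGroup, mem_fixingSubgroup_iff, Perm.smul_def]

lemma apply_mem_Icc {σ : Perm ℕ} (hσ : σ ∈ symGroup n) {x : ℕ} (hx : x ∈ Icc 1 n) :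
    σ x ∈ Icc 1 n := by
  by_contra h
  rw [σ.injective (mem_symGroup.1 hσ _ h)] at h
  exact h hx

lemma apply_mem_Icc_iff {σ : Perm ℕ} (hσ : σ ∈ symGroup n) {x : ℕ} :
    σ x ∈ Icc 1 n ↔ x ∈ Icc 1 n :=
  ⟨fun h => by simpa using apply_mem_Icc (inv_mem hσ) h, apply_mem_Icc hσ⟩

lemma swap_mem_symGroup (i : HIdx n) : swap i.1 (i.1 + 1) ∈ symGroup n :=
  mem_symGroup.2 fun x hx => by
    have := i.2
    rw [mem_Icc] at hx
    exact swap_apply_of_ne_of_ne (by omega) (by omega)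

lemma wordPerm_mem_symGroup (w : List (HIdx n)) : wordPerm n w ∈ symGroup n :=
  Subgroup.list_prod_mem _ <| by simpa using fun i _ => swap_mem_symGroup i

/-- Ordered rather than unordered pairs: a permutation then transports them without sorting
(`card_discordantPairs_mul_right`), and each inversion is counted twice (`two_mul_invCount`). -/
def discordantPairs (n : ℕ) (σ τ : Perm ℕ) : Finset (ℕ × ℕ) :=
  {p ∈ Icc 1 n ×ˢ Icc 1 n | ¬(σ p.1 < σ p.2 ↔ τ p.1 < τ p.2)}

def invCount (n : ℕ) (σ : Perm ℕ) : ℕ :=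
  #{p ∈ Icc 1 n ×ˢ Icc 1 n | p.1 < p.2 ∧ σ p.2 < σ p.1}

lemma mem_discordantPairs {σ τ : Perm ℕ} {p : ℕ × ℕ} :
    p ∈ discordantPairs n σ τ ↔
      p.1 ∈ Icc 1 n ∧ p.2 ∈ Icc 1 n ∧ ¬(σ p.1 < σ p.2 ↔ τ p.1 < τ p.2) := by
  simp [discordantPairs, and_assoc]

lemma card_discordantPairs_mul_right {C : Perm ℕ} (hC : C ∈ symGroup n) (σ τ : Perm ℕ) :
    #(discordantPairs n (σ * C) (τ * C)) = #(discordantPairs n σ τ) :=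
  card_equiv (C.prodCongr C) fun p => by
    simp [mem_discordantPairs, apply_mem_Icc_iff hC]

lemma discordantPairs_comm (σ τ : Perm ℕ) : discordantPairs n σ τ = discordantPairs n τ σ :=
  filter_congr fun _ _ => not_congr Iff.comm

lemma two_mul_invCount (σ : Perm ℕ) : 2 * invCount n σ = #(discordantPairs n 1 σ) := by
  have hswap : #{p ∈ Icc 1 n ×ˢ Icc 1 n | p.2 < p.1 ∧ σ p.1 < σ p.2} = invCount n σ :=
    card_equiv (Equiv.prodComm ℕ ℕ) fun p => by simp [and_comm]
  rw [two_mul]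
  nth_rw 2 [← hswap]
  rw [invCount, ← card_union_of_disjoint, discordantPairs]
  · congr 1
    ext p
    simp only [mem_filter, mem_union, Perm.one_apply]
    have := σ.injective.ne (a₁ := p.1) (a₂ := p.2)
    by_cases h : p.1 = p.2 <;> grind
  · exact disjoint_filter.2 fun p _ h1 h2 => by omega

lemma invCount_inv {σ : Perm ℕ} (hσ : σ ∈ symGroup n) : invCount n σ⁻¹ = invCount n σ := by
  have h := card_discordantPairs_mul_right hσ 1 σ⁻¹
  rw [one_mul, inv_mul_cancel, discordantPairs_comm] at h
  have h1 := two_mul_invCount (n := n) σ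
  have h2 := two_mul_invCount (n := n) σ⁻¹
  omega

lemma invCount_add_invCount (A : Perm ℕ) {B : Perm ℕ} (hB : B ∈ symGroup n) :
    invCount n A + invCount n B =
      invCount n (A * B) + #(discordantPairs n 1 B ∩ discordantPairs n B (A * B)) := by
  have hA : 2 * invCount n A = #(discordantPairs n B (A * B)) := by
    rw [two_mul_invCount, ← card_discordantPairs_mul_right hB, one_mul]
  -- pairwise, `[x ≠ y] + [y ≠ z] = [x ≠ z] + 2 [x ≠ y ∧ y ≠ z]` where `x`, `y`, `z` say
  -- whether `1`, `B`, `A * B` keep the pair in order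
  have hcount : #(discordantPairs n 1 B) + #(discordantPairs n B (A * B)) =
      #(discordantPairs n 1 (A * B)) +
        2 * #(discordantPairs n 1 B ∩ discordantPairs n B (A * B)) := by
    simp only [discordantPairs, ← filter_and, card_filter, ← sum_add_distrib, mul_sum]
    refine sum_congr rfl fun p _ => ?_
    split_ifs <;> tauto
  have hB2 := two_mul_invCount (n := n) B
  have hAB := two_mul_invCount (n := n) (A * B)
  omega

lemma invCount_mul_le (A : Perm ℕ) {B : Perm ℕ} (hB : B ∈ symGroup n) :
    invCount n (A * B) ≤ invCount n A + invCount n B := by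
  have := invCount_add_invCount A hB
  omega

lemma invCount_mul_eq_add_iff (A : Perm ℕ) {B : Perm ℕ} (hB : B ∈ symGroup n) :
    invCount n (A * B) = invCount n A + invCount n B ↔
      ∀ x ∈ Icc 1 n, ∀ y ∈ Icc 1 n, x < y → B⁻¹ y < B⁻¹ x → A x < A y := by
  rw [invCount_add_invCount A hB, left_eq_add, card_eq_zero, eq_empty_iff_forall_notMem]
  simp only [mem_inter, mem_discordantPairs, Perm.one_apply, Perm.mul_apply, Prod.forall]
  constructor
  · intro h x hx y hy hxy hBxy
    have hAxy := A.injective.ne hxy.ne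
    by_contra hA
    refine h _ _ ⟨⟨apply_mem_Icc (inv_mem hB) hy, apply_mem_Icc (inv_mem hB) hx, ?_⟩,
      apply_mem_Icc (inv_mem hB) hy, apply_mem_Icc (inv_mem hB) hx, ?_⟩ <;>
      simp [Perm.coe_inv] at hBxy ⊢ <;> omega
  · rintro h a b ⟨⟨ha, hb, hB₁⟩, -, -, hB₂⟩
    have hne : a ≠ b := by rintro rfl; simp at hB₁
    have hBne := B.injective.ne hne
    rcases lt_or_gt_of_ne hBne with hlt | hlt
    · have := h _ (apply_mem_Icc hB ha) _ (apply_mem_Icc hB hb) hlt (by simp; omega)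
      tauto
    · have := h _ (apply_mem_Icc hB hb) _ (apply_mem_Icc hB ha) hlt (by simp; omega)
      have := A.injective.ne hBne
      omega

lemma invCount_one : invCount n 1 = 0 := by
  rw [invCount, card_eq_zero, filter_eq_empty_iff]
  simp only [Perm.one_apply]
  omega

lemma discordantPairs_one_swap (i : HIdx n) :
    discordantPairs n 1 (swap i.1 (i.1 + 1)) = {(i.1, i.1 + 1), (i.1 + 1, i.1)} := by
  have := i.2
  ext ⟨a, b⟩
  simp only [mem_discordantPairs, mem_Icc, Perm.one_apply, mem_insert, mem_singleton,
    Prod.mk.injEq, swap_apply_def]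
  split_ifs <;> omega

lemma invCount_swap (i : HIdx n) : invCount n (swap i.1 (i.1 + 1)) = 1 := by
  have h := two_mul_invCount (n := n) (swap i.1 (i.1 + 1))
  rw [discordantPairs_one_swap, card_pair (by simp)] at h
  omega

lemma invCount_mul_swap (A : Perm ℕ) (i : HIdx n) :
    invCount n (A * swap i.1 (i.1 + 1)) + (if A (i.1 + 1) < A i.1 then 2 else 0) =
      invCount n A + 1 := by
  have h := invCount_add_invCount A (swap_mem_symGroup i)
  have hA := A.injective.ne (show i.1 ≠ i.1 + 1 by omega)
  have hinter : discordantPairs n 1 (swap i.1 (i.1 + 1)) ∩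
      discordantPairs n (swap i.1 (i.1 + 1)) (A * swap i.1 (i.1 + 1)) =
        if A (i.1 + 1) < A i.1 then {(i.1, i.1 + 1), (i.1 + 1, i.1)} else ∅ := by
    have := i.2
    rw [discordantPairs_one_swap]
    ext ⟨a, b⟩
    simp only [mem_inter, mem_discordantPairs, mem_insert, mem_singleton, Prod.mk.injEq,
      Perm.mul_apply, mem_Icc]
    split_ifs with hlt
    · simp only [mem_insert, mem_singleton, Prod.mk.injEq, and_iff_left_iff_imp]
      rintro (⟨rfl, rfl⟩ | ⟨rfl, rfl⟩) <;> simp <;> omega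
    · simp only [notMem_empty, iff_false, not_and]
      rintro (⟨rfl, rfl⟩ | ⟨rfl, rfl⟩) <;> simp <;> omega
  rw [invCount_swap, hinter] at h
  split_ifs at h ⊢ <;> simp_all

lemma invCount_mul_swap_of_lt {A : Perm ℕ} {i : HIdx n} (h : A i.1 < A (i.1 + 1)) :
    invCount n (A * swap i.1 (i.1 + 1)) = invCount n A + 1 := by
  have := invCount_mul_swap A i
  rwa [if_neg (by omega), add_zero] at this

lemma invCount_mul_swap_of_gt {A : Perm ℕ} {i : HIdx n} (h : A (i.1 + 1) < A i.1) :
    invCount n (A * swap i.1 (i.1 + 1)) + 1 = invCount n A := by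
  have := invCount_mul_swap A i
  rw [if_pos h] at this
  omega

lemma invCount_swap_mul_of_lt {A : Perm ℕ} (hA : A ∈ symGroup n) {i : HIdx n}
    (h : A⁻¹ i.1 < A⁻¹ (i.1 + 1)) :
    invCount n (swap i.1 (i.1 + 1) * A) = invCount n A + 1 := by
  rw [← invCount_inv (mul_mem (swap_mem_symGroup i) hA), mul_inv_rev, swap_inv,
    invCount_mul_swap_of_lt h, invCount_inv hA]

lemma invCount_swap_mul_of_gt {A : Perm ℕ} (hA : A ∈ symGroup n) {i : HIdx n}
    (h : A⁻¹ (i.1 + 1) < A⁻¹ i.1) :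
    invCount n (swap i.1 (i.1 + 1) * A) + 1 = invCount n A := by
  rw [← invCount_inv (mul_mem (swap_mem_symGroup i) hA), mul_inv_rev, swap_inv,
    invCount_mul_swap_of_gt h, invCount_inv hA]

lemma invCount_swap_mul_le {A : Perm ℕ} (hA : A ∈ symGroup n) (i : HIdx n) :
    invCount n (swap i.1 (i.1 + 1) * A) ≤ invCount n A + 1 := by
  have := invCount_mul_le (swap i.1 (i.1 + 1)) hA
  rw [invCount_swap] at this
  omega

lemma inv_apply_lt_of_invCount_swap_mul {A : Perm ℕ} (hA : A ∈ symGroup n) {i : HIdx n}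
    (h : invCount n (swap i.1 (i.1 + 1) * A) = invCount n A + 1) : A⁻¹ i.1 < A⁻¹ (i.1 + 1) := by
  by_contra hge
  have := invCount_swap_mul_of_gt hA (lt_of_le_of_ne (not_lt.1 hge) (A⁻¹.injective.ne (by omega)))
  omega

/-- `x ≤ σ x` by induction on `x`, and summing over `{1, …, n}` forces equality. -/
lemma eq_one_of_forall_apply_lt {σ : Perm ℕ} (hσ : σ ∈ symGroup n)
    (h : ∀ i : HIdx n, σ i.1 < σ (i.1 + 1)) : σ = 1 := by
  have hle : ∀ x ∈ Icc 1 n, x ≤ σ x := by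
    intro x hx
    induction x with
    | zero => simp at hx
    | succ k ih =>
      rcases Nat.eq_zero_or_pos k with rfl | hk
      · exact (mem_Icc.1 (apply_mem_Icc hσ hx)).1
      · rw [mem_Icc] at hx
        have : σ k < σ (k + 1) := h ⟨k, hk, hx.2⟩
        have := ih (mem_Icc.2 ⟨hk, by omega⟩)
        omega
  have hsum : ∑ x ∈ Icc 1 n, x = ∑ x ∈ Icc 1 n, σ x :=
    (Perm.sum_comp σ _ id fun x hx => by_contra fun h' => hx (mem_symGroup.1 hσ x h')).symm
  ext x
  by_cases hx : x ∈ Icc 1 n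
  · exact ((sum_eq_sum_iff_of_le hle).1 hsum x hx).symm
  · exact mem_symGroup.1 hσ x hx

@[simp]
lemma wordPerm_nil : wordPerm n [] = 1 := rfl

@[simp]
lemma wordPerm_cons (i : HIdx n) (w : List (HIdx n)) :
    wordPerm n (i :: w) = swap i.1 (i.1 + 1) * wordPerm n w := by
  simp [wordPerm]

@[simp]
lemma wordPerm_append (u v : List (HIdx n)) :
    wordPerm n (u ++ v) = wordPerm n u * wordPerm n v := by
  simp [wordPerm]

lemma exists_wordPerm_eq_length_eq {σ : Perm ℕ} (hσ : σ ∈ symGroup n) :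
    ∃ w, wordPerm n w = σ ∧ w.length = invCount n σ := by
  induction hk : invCount n σ using Nat.strong_induction_on generalizing σ with
  | _ k ih =>
  by_cases h : ∃ i : HIdx n, σ (i.1 + 1) < σ i.1
  · obtain ⟨i, hi⟩ := h
    have hlen := invCount_mul_swap_of_gt hi
    obtain ⟨w, hw, hwl⟩ := ih _ (by omega) (mul_mem hσ (swap_mem_symGroup i)) rfl
    refine ⟨w ++ [i], by simp [hw], by simp; omega⟩
  · push Not at h
    obtain rfl := eq_one_of_forall_apply_lt hσ fun i =>
      lt_of_le_of_ne (h i) (σ.injective.ne (by omega))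
    exact ⟨[], rfl, by simp [← hk, invCount_one]⟩

lemma invCount_wordPerm_le (w : List (HIdx n)) : invCount n (wordPerm n w) ≤ w.length := by
  induction w with
  | nil => simp [invCount_one]
  | cons i w ih =>
    have := invCount_swap_mul_le (wordPerm_mem_symGroup w) i
    simp only [wordPerm_cons, List.length_cons]
    omega

lemma isRedWord_of_length_eq {σ : Perm ℕ} {w : List (HIdx n)} (h : wordPerm n w = σ)
    (hl : w.length = invCount n σ) : IsRedWord n σ w :=
  ⟨h, fun w' hw' => hl ▸ hw' ▸ invCount_wordPerm_le w'⟩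

lemma exists_isRedWord {σ : Perm ℕ} (hσ : σ ∈ symGroup n) : ∃ w, IsRedWord n σ w :=
  let ⟨w, hw, hl⟩ := exists_wordPerm_eq_length_eq hσ
  ⟨w, isRedWord_of_length_eq hw hl⟩

lemma IsRedWord.mem_symGroup {σ : Perm ℕ} {w : List (HIdx n)} (h : IsRedWord n σ w) :
    σ ∈ symGroup n :=
  h.1 ▸ wordPerm_mem_symGroup w

lemma IsRedWord.length_eq {σ : Perm ℕ} {w : List (HIdx n)} (h : IsRedWord n σ w) :
    w.length = invCount n σ := by
  obtain ⟨w', hw', hl'⟩ := exists_wordPerm_eq_length_eq h.mem_symGroup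
  exact le_antisymm (hl' ▸ h.2 w' hw') (h.1 ▸ invCount_wordPerm_le w)

lemma isRedWord_cons_iff {σ : Perm ℕ} {i : HIdx n} {w : List (HIdx n)} :
    IsRedWord n σ (i :: w) ↔
      IsRedWord n (swap i.1 (i.1 + 1) * σ) w ∧ σ⁻¹ (i.1 + 1) < σ⁻¹ i.1 := by
  constructor
  · intro h
    have hσ := h.mem_symGroup
    have hw : wordPerm n w = swap i.1 (i.1 + 1) * σ := by
      rw [← h.1, wordPerm_cons, swap_mul_self_mul]
    have hsσ : swap i.1 (i.1 + 1) * σ ∈ symGroup n := mul_mem (swap_mem_symGroup i) hσ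
    have hlen := h.length_eq
    have hwl := invCount_wordPerm_le w
    have hle := invCount_swap_mul_le hsσ i
    rw [hw] at hwl
    rw [swap_mul_self_mul] at hle
    simp only [List.length_cons] at hlen
    refine ⟨isRedWord_of_length_eq hw (by omega), ?_⟩
    simpa using inv_apply_lt_of_invCount_swap_mul hsσ (i := i) (by rw [swap_mul_self_mul]; omega)
  · rintro ⟨h, hi⟩
    have hσ : σ ∈ symGroup n := by
      simpa using mul_mem (swap_mem_symGroup i) h.mem_symGroup
    have := invCount_swap_mul_of_gt hσ hi
    exact isRedWord_of_length_eq (by rw [wordPerm_cons, h.1, swap_mul_self_mul])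
      (by simp only [List.length_cons, h.length_eq]; omega)

lemma IsRedWord.append_singleton {σ : Perm ℕ} {w : List (HIdx n)} (h : IsRedWord n σ w)
    {i : HIdx n} (hi : σ i.1 < σ (i.1 + 1)) :
    IsRedWord n (σ * swap i.1 (i.1 + 1)) (w ++ [i]) :=
  isRedWord_of_length_eq (by simp [h.1])
    (by simp [h.length_eq, invCount_mul_swap_of_lt hi])

end PermLength

section HeckeWords

open Equiv

variable {n : ℕ}

def piWord (n : ℕ) (w : List (HIdx n)) : Hecke0 n := (w.map (piGen n)).prod

def piBarWord (n : ℕ) (w : List (HIdx n)) : Hecke0 n := (w.map (piBar n)).prod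

@[simp]
lemma piWord_nil : piWord n [] = 1 := rfl

@[simp]
lemma piWord_cons (i : HIdx n) (w : List (HIdx n)) :
    piWord n (i :: w) = piGen n i * piWord n w := by
  simp [piWord]

@[simp]
lemma piWord_append (u v : List (HIdx n)) : piWord n (u ++ v) = piWord n u * piWord n v := by
  simp [piWord]

@[simp]
lemma piBarWord_nil : piBarWord n [] = 1 := rfl

@[simp]
lemma piBarWord_cons (i : HIdx n) (w : List (HIdx n)) :
    piBarWord n (i :: w) = piBar n i * piBarWord n w := by
  simp [piBarWord]

lemma piGen_mul_self (i : HIdx n) : piGen n i * piGen n i = piGen n i := by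
  simpa [piGen] using RingQuot.mkAlgHom_rel ℂ (HeckeRel.idem i)

lemma piGen_braid {i j : HIdx n} (h : i.1 + 1 = j.1) :
    piGen n i * piGen n j * piGen n i = piGen n j * piGen n i * piGen n j := by
  simpa [piGen] using RingQuot.mkAlgHom_rel ℂ (HeckeRel.braid i j h)

lemma piGen_comm {i j : HIdx n} (h : i.1 + 2 ≤ j.1) :
    piGen n i * piGen n j = piGen n j * piGen n i := by
  simpa [piGen] using RingQuot.mkAlgHom_rel ℂ (HeckeRel.comm i j h)

lemma swap_mul_swap_comm {i j : ℕ} (h : i + 2 ≤ j) :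
    swap i (i + 1) * swap j (j + 1) = swap j (j + 1) * swap i (i + 1) := by
  ext x
  simp only [Perm.mul_apply, swap_apply_def]
  split_ifs <;> omega

lemma swap_mul_swap_mul_swap_succ (i : ℕ) :
    swap i (i + 1) * swap (i + 1) (i + 2) * swap i (i + 1) =
      swap (i + 1) (i + 2) * swap i (i + 1) * swap (i + 1) (i + 2) := by
  ext x
  simp only [Perm.mul_apply, swap_apply_def]
  split_ifs <;> omega

lemma exists_piWord_cons_eq_of_comm {σ : Perm ℕ} (hσ : σ ∈ symGroup n) {a b : HIdx n}
    (hab : a.1 + 2 ≤ b.1) (ha : σ⁻¹ (a.1 + 1) < σ⁻¹ a.1) (hb : σ⁻¹ (b.1 + 1) < σ⁻¹ b.1) :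
    ∃ x y, IsRedWord n σ (a :: x) ∧ IsRedWord n σ (b :: y) ∧
      piWord n (a :: x) = piWord n (b :: y) := by
  obtain ⟨r, hr⟩ := exists_isRedWord (σ := swap b.1 (b.1 + 1) * (swap a.1 (a.1 + 1) * σ))
    (mul_mem (swap_mem_symGroup b) (mul_mem (swap_mem_symGroup a) hσ))
  have hcomm : swap a.1 (a.1 + 1) * (swap b.1 (b.1 + 1) * σ) =
      swap b.1 (b.1 + 1) * (swap a.1 (a.1 + 1) * σ) := by
    rw [← mul_assoc, ← mul_assoc, swap_mul_swap_comm hab]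
  refine ⟨b :: r, a :: r, ?_, ?_, ?_⟩
  · refine isRedWord_cons_iff.2 ⟨isRedWord_cons_iff.2 ⟨hr, ?_⟩, ha⟩
    simpa (disch := omega) [swap_apply_of_ne_of_ne] using hb
  · refine isRedWord_cons_iff.2 ⟨isRedWord_cons_iff.2 ⟨hcomm ▸ hr, ?_⟩, hb⟩
    simpa (disch := omega) [swap_apply_of_ne_of_ne] using ha
  · simp only [piWord_cons, ← mul_assoc, piGen_comm hab]

lemma exists_piWord_cons_eq_of_braid {σ : Perm ℕ} (hσ : σ ∈ symGroup n) {a b : HIdx n}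
    (hab : b.1 = a.1 + 1) (ha : σ⁻¹ (a.1 + 1) < σ⁻¹ a.1) (hb : σ⁻¹ (b.1 + 1) < σ⁻¹ b.1) :
    ∃ x y, IsRedWord n σ (a :: x) ∧ IsRedWord n σ (b :: y) ∧
      piWord n (a :: x) = piWord n (b :: y) := by
  obtain ⟨r, hr⟩ := exists_isRedWord
    (σ := swap a.1 (a.1 + 1) * (swap b.1 (b.1 + 1) * (swap a.1 (a.1 + 1) * σ)))
    (mul_mem (swap_mem_symGroup a) (mul_mem (swap_mem_symGroup b)
      (mul_mem (swap_mem_symGroup a) hσ)))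
  have hbraid : swap b.1 (b.1 + 1) * (swap a.1 (a.1 + 1) * (swap b.1 (b.1 + 1) * σ)) =
      swap a.1 (a.1 + 1) * (swap b.1 (b.1 + 1) * (swap a.1 (a.1 + 1) * σ)) := by
    simp only [← mul_assoc, hab, swap_mul_swap_mul_swap_succ]
  refine ⟨b :: a :: r, a :: b :: r, ?_, ?_, ?_⟩
  · refine isRedWord_cons_iff.2
      ⟨isRedWord_cons_iff.2 ⟨isRedWord_cons_iff.2 ⟨hr, ?_⟩, ?_⟩, ha⟩
    all_goals
      simp only [mul_inv_rev, swap_inv, Perm.mul_apply, hab] at hb ⊢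
      simp (disch := omega) only [swap_apply_left, swap_apply_right, swap_apply_of_ne_of_ne]
      omega
  · refine isRedWord_cons_iff.2
      ⟨isRedWord_cons_iff.2 ⟨isRedWord_cons_iff.2 ⟨hbraid ▸ hr, ?_⟩, ?_⟩, hb⟩
    all_goals
      simp only [mul_inv_rev, swap_inv, Perm.mul_apply, hab] at hb ⊢
      simp (disch := omega) only [swap_apply_left, swap_apply_right, swap_apply_of_ne_of_ne]
      omega
  · simp only [piWord_cons, ← mul_assoc, piGen_braid hab.symm]

lemma exists_piWord_cons_eq_of_lt {σ : Perm ℕ} (hσ : σ ∈ symGroup n) {a b : HIdx n}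
    (hab : a.1 < b.1) (ha : σ⁻¹ (a.1 + 1) < σ⁻¹ a.1) (hb : σ⁻¹ (b.1 + 1) < σ⁻¹ b.1) :
    ∃ x y, IsRedWord n σ (a :: x) ∧ IsRedWord n σ (b :: y) ∧
      piWord n (a :: x) = piWord n (b :: y) := by
  rcases Nat.lt_or_ge (a.1 + 1) b.1 with h | h
  · exact exists_piWord_cons_eq_of_comm hσ h ha hb
  · exact exists_piWord_cons_eq_of_braid hσ (by omega) ha hb

/-- Matsumoto's theorem in `H_n(0)`. -/
theorem piWord_eq_of_isRedWord {σ : Perm ℕ} {u v : List (HIdx n)} (hu : IsRedWord n σ u)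
    (hv : IsRedWord n σ v) : piWord n u = piWord n v := by
  induction hk : invCount n σ using Nat.strong_induction_on generalizing σ u v with
  | _ k ih =>
  have same_head {c : HIdx n} {x y : List (HIdx n)} (hx : IsRedWord n σ (c :: x))
      (hy : IsRedWord n σ (c :: y)) : piWord n (c :: x) = piWord n (c :: y) := by
    have hlen := hx.length_eq
    rw [isRedWord_cons_iff] at hx hy
    rw [piWord_cons, piWord_cons, ih _ (by simp [← hk, ← hx.1.length_eq] at hlen ⊢; omega)
      hx.1 hy.1 rfl]
  have cross {a b : HIdx n} {x y : List (HIdx n)} (hab : a.1 < b.1) (hx : IsRedWord n σ (a :: x))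
      (hy : IsRedWord n σ (b :: y)) : piWord n (a :: x) = piWord n (b :: y) := by
    obtain ⟨x', y', hx', hy', heq⟩ := exists_piWord_cons_eq_of_lt hx.mem_symGroup hab
      (isRedWord_cons_iff.1 hx).2 (isRedWord_cons_iff.1 hy).2
    rw [same_head hx hx', heq, same_head hy' hy]
  have hlen := hu.length_eq.trans hv.length_eq.symm
  match u, v, hu, hv with
  | [], [], _, _ => rfl
  | [], _ :: _, _, _ => simp at hlen
  | _ :: _, [], _, _ => simp at hlen
  | a :: x, b :: y, hx, hy =>
    rcases lt_trichotomy a.1 b.1 with hab | hab | hab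
    · exact cross hab hx hy
    · obtain rfl : a = b := Subtype.ext hab
      exact same_head hx hy
    · exact (cross hab hy hx).symm

end HeckeWords

section Vanishing

open Equiv Finset

variable {n : ℕ}

lemma piWord_mul_piGen_of_gt {σ : Perm ℕ} {w : List (HIdx n)} (hw : IsRedWord n σ w)
    {i : HIdx n} (hi : σ (i.1 + 1) < σ i.1) : piWord n w * piGen n i = piWord n w := by
  obtain ⟨r, hr⟩ := exists_isRedWord (mul_mem hw.mem_symGroup (swap_mem_symGroup i))
  have hri : IsRedWord n σ (r ++ [i]) := by
    simpa using hr.append_singleton (i := i) (by simpa using hi)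
  rw [piWord_eq_of_isRedWord hw hri, piWord_append, mul_assoc]
  simp [piWord, piGen_mul_self]

lemma piWord_mul_piBar (w : List (HIdx n)) (i : HIdx n) :
    piWord n w * piBar n i = piWord n (w ++ [i]) - piWord n w := by
  simp [piBar, mul_sub, piWord]

lemma invCount_mul_swap_mul {A B : Perm ℕ} (hB : B ∈ symGroup n) {i : HIdx n}
    (hadd : invCount n (A * B) = invCount n A + invCount n B)
    (hA : A i.1 < A (i.1 + 1)) (hBi : B⁻¹ i.1 < B⁻¹ (i.1 + 1)) :
    invCount n (A * (swap i.1 (i.1 + 1) * B)) = invCount n A + invCount n B + 1 := by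
  rw [(invCount_mul_eq_add_iff A (mul_mem (swap_mem_symGroup i) hB)).2 ?_,
    invCount_swap_mul_of_lt hB hBi, add_assoc]
  rw [invCount_mul_eq_add_iff A hB] at hadd
  have := i.2
  have hi0 : i.1 ∈ Icc 1 n := mem_Icc.2 ⟨i.2.1, by omega⟩
  have hi1 : i.1 + 1 ∈ Icc 1 n := mem_Icc.2 ⟨by omega, i.2.2⟩
  intro x hx y hy hxy hsxy
  simp only [mul_inv_rev, swap_inv, Perm.mul_apply] at hsxy
  rcases eq_or_ne x i.1 with rfl | hx0
  · rcases eq_or_ne y (i.1 + 1) with rfl | hy1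
    · exact hA
    · rw [swap_apply_left, swap_apply_of_ne_of_ne (by omega) hy1] at hsxy
      exact hA.trans (hadd _ hi1 _ hy (by omega) hsxy)
  rcases eq_or_ne x (i.1 + 1) with rfl | hx1
  · rw [swap_apply_right, swap_apply_of_ne_of_ne (by omega) (by omega)] at hsxy
    exact hadd _ hx _ hy hxy (hsxy.trans hBi)
  rw [swap_apply_of_ne_of_ne hx0 hx1] at hsxy
  rcases eq_or_ne y i.1 with rfl | hy0
  · rw [swap_apply_left] at hsxy
    exact hadd _ hx _ hy hxy (hBi.trans hsxy)
  rcases eq_or_ne y (i.1 + 1) with rfl | hy1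
  · rw [swap_apply_right] at hsxy
    exact (hadd _ hx _ hi0 (by omega) hsxy).trans hA
  rw [swap_apply_of_ne_of_ne hy0 hy1] at hsxy
  exact hadd _ hx _ hy hxy hsxy

theorem piWord_mul_piBarWord_eq_zero {σ ρ : Perm ℕ} {u w : List (HIdx n)}
    (hu : IsRedWord n σ u) (hw : IsRedWord n ρ w)
    (hlt : invCount n (σ * ρ) < invCount n σ + invCount n ρ) :
    piWord n u * piBarWord n w = 0 := by
  induction w generalizing σ ρ u with
  | nil =>
    rw [← hw.1, wordPerm_nil, mul_one, invCount_one] at hlt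
    omega
  | cons i w ih =>
    obtain ⟨hw', hρi⟩ := isRedWord_cons_iff.1 hw
    set ρ' := swap i.1 (i.1 + 1) * ρ
    have hρ : ρ = swap i.1 (i.1 + 1) * ρ' := (swap_mul_self_mul _ _ ρ).symm
    have hρ'i : ρ'⁻¹ i.1 < ρ'⁻¹ (i.1 + 1) := by simpa [ρ'] using hρi
    have hlenρ := invCount_swap_mul_of_lt hw'.mem_symGroup hρ'i
    rw [← hρ] at hlenρ
    rw [piBarWord_cons, ← mul_assoc]
    rcases lt_or_gt_of_ne (σ.injective.ne (show i.1 ≠ i.1 + 1 by omega)) with hσi | hσi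
    · have hlenσ := invCount_mul_swap_of_lt hσi
      have h₁ : piWord n (u ++ [i]) * piBarWord n w = 0 :=
        ih (hu.append_singleton hσi) hw' (by rw [mul_assoc, ← hρ, hlenσ]; omega)
      have h₂ : piWord n u * piBarWord n w = 0 := by
        refine ih hu hw' (lt_of_le_of_ne (invCount_mul_le σ hw'.mem_symGroup) fun hadd => ?_)
        have := invCount_mul_swap_mul hw'.mem_symGroup hadd hσi hρ'i
        rw [← hρ] at this
        omega
      rw [piWord_mul_piBar, sub_mul, h₁, h₂, sub_zero]
    · rw [piBar, mul_sub, mul_one, piWord_mul_piGen_of_gt hu hσi, sub_self, zero_mul]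

end Vanishing

section Representation

open Equiv Finset

variable {n : ℕ}

/-- The action of `π_i` on the basis vector `e_σ` of `ℂ[S_n]`; the condition says that
`ℓ(s_i σ) = ℓ(σ) + 1`. -/
def sortStep (i : ℕ) (σ : Perm ℕ) : Perm ℕ :=
  if σ⁻¹ i < σ⁻¹ (i + 1) then swap i (i + 1) * σ else σ

lemma sortStep_comp_self (i : ℕ) : sortStep i ∘ sortStep i = sortStep i := by
  funext σ
  by_cases h : σ⁻¹ i < σ⁻¹ (i + 1)
  · have h' : ¬(swap i (i + 1) * σ)⁻¹ i < (swap i (i + 1) * σ)⁻¹ (i + 1) := by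
      simpa using h.le
    simp only [Function.comp_apply, sortStep, if_pos h, if_neg h']
  · simp only [Function.comp_apply, sortStep, if_neg h]

lemma sortStep_comm {i j : ℕ} (h : i + 2 ≤ j) :
    sortStep i ∘ sortStep j = sortStep j ∘ sortStep i := by
  funext σ
  simp only [Function.comp_apply, sortStep]
  split_ifs <;>
    simp (disch := omega) only [mul_inv_rev, swap_inv, Perm.mul_apply,
      swap_apply_of_ne_of_ne] at * <;>
    first | omega | rfl | simp only [← mul_assoc, swap_mul_swap_comm h]

lemma sortStep_braid (i : ℕ) :
    sortStep i ∘ sortStep (i + 1) ∘ sortStep i =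
      sortStep (i + 1) ∘ sortStep i ∘ sortStep (i + 1) := by
  funext σ
  have h₁ := σ⁻¹.injective.ne (show i ≠ i + 1 by omega)
  have h₂ := σ⁻¹.injective.ne (show i + 1 ≠ i + 1 + 1 by omega)
  have h₃ := σ⁻¹.injective.ne (show i ≠ i + 1 + 1 by omega)
  simp only [Function.comp_apply, sortStep]
  split_ifs <;>
    simp (disch := omega) only [mul_inv_rev, swap_inv, Perm.mul_apply, swap_apply_left,
      swap_apply_right, swap_apply_of_ne_of_ne] at * <;>
    first | omega | rfl | simp only [← mul_assoc, swap_mul_swap_mul_swap_succ]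

noncomputable def permRep (n : ℕ) : Hecke0 n →ₐ[ℂ] Module.End ℂ (Perm ℕ →₀ ℂ) :=
  RingQuot.liftAlgHom ℂ ⟨FreeAlgebra.lift ℂ fun i => Finsupp.lmapDomain ℂ ℂ (sortStep i.1), by
    rintro _ _ (⟨i⟩ | ⟨i, j, h⟩ | ⟨i, j, h⟩) <;>
      simp only [map_mul, FreeAlgebra.lift_ι_apply, Module.End.mul_eq_comp,
        ← Finsupp.lmapDomain_comp]
    · rw [sortStep_comp_self]
    · rw [← h, Function.comp_assoc, sortStep_braid, Function.comp_assoc]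
    · rw [sortStep_comm h]⟩

lemma permRep_piGen (i : HIdx n) :
    permRep n (piGen n i) = Finsupp.lmapDomain ℂ ℂ (sortStep i.1) := by
  rw [permRep, piGen, RingQuot.liftAlgHom_mkAlgHom_apply, FreeAlgebra.lift_ι_apply]

lemma permRep_piGen_single (i : HIdx n) (τ : Perm ℕ) (c : ℂ) :
    permRep n (piGen n i) (Finsupp.single τ c) = Finsupp.single (sortStep i.1 τ) c := by
  rw [permRep_piGen, Finsupp.lmapDomain_apply, Finsupp.mapDomain_single]

def shorterThan (n m : ℕ) : Set (Perm ℕ) := {τ | τ ∈ symGroup n ∧ invCount n τ < m}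

lemma shorterThan_mono {m m' : ℕ} (h : m ≤ m') : shorterThan n m ⊆ shorterThan n m' :=
  fun _ hτ => ⟨hτ.1, hτ.2.trans_le h⟩

lemma sortStep_mem_shorterThan {m : ℕ} {τ : Perm ℕ} (hτ : τ ∈ shorterThan n m) (i : HIdx n) :
    sortStep i.1 τ ∈ shorterThan n (m + 1) := by
  obtain ⟨hτ, hlt⟩ := hτ
  unfold sortStep
  split_ifs
  · exact ⟨mul_mem (swap_mem_symGroup i) hτ, (invCount_swap_mul_le hτ i).trans_lt (by omega)⟩
  · exact ⟨hτ, by omega⟩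

lemma permRep_piGen_mem_supported {m : ℕ} {f : Perm ℕ →₀ ℂ}
    (hf : f ∈ Finsupp.supported ℂ ℂ (shorterThan n m)) (i : HIdx n) :
    permRep n (piGen n i) f ∈ Finsupp.supported ℂ ℂ (shorterThan n (m + 1)) := by
  rw [permRep_piGen]
  exact Finsupp.supported_comap_lmapDomain ℂ ℂ _ _
    (Finsupp.supported_mono (fun _ hτ => sortStep_mem_shorterThan hτ i) hf)

lemma permRep_piWord_mem_supported {m : ℕ} {f : Perm ℕ →₀ ℂ}
    (hf : f ∈ Finsupp.supported ℂ ℂ (shorterThan n m)) (w : List (HIdx n)) :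
    permRep n (piWord n w) f ∈ Finsupp.supported ℂ ℂ (shorterThan n (m + w.length)) := by
  induction w with
  | nil => simpa using hf
  | cons i w ih =>
    rw [piWord_cons, map_mul, Module.End.mul_apply, List.length_cons, ← add_assoc]
    exact permRep_piGen_mem_supported ih i

lemma permRep_piWord_single {σ ρ : Perm ℕ} {u : List (HIdx n)} (hu : IsRedWord n σ u)
    (hρ : ρ ∈ symGroup n) (hadd : invCount n (σ * ρ) = invCount n σ + invCount n ρ) :
    permRep n (piWord n u) (Finsupp.single ρ 1) = Finsupp.single (σ * ρ) 1 := by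
  induction u generalizing σ with
  | nil => simp [← hu.1]
  | cons i u ih =>
    obtain ⟨hu', hi⟩ := isRedWord_cons_iff.1 hu
    have hσ : σ = swap i.1 (i.1 + 1) * (swap i.1 (i.1 + 1) * σ) :=
      (swap_mul_self_mul _ _ σ).symm
    have hlenσ := invCount_swap_mul_of_gt hu.mem_symGroup hi
    have hle₁ := invCount_mul_le (swap i.1 (i.1 + 1) * σ) hρ
    have hle₂ := invCount_swap_mul_le (mul_mem hu'.mem_symGroup hρ) i
    rw [← mul_assoc, ← hσ] at hle₂
    have hasc : sortStep i.1 (swap i.1 (i.1 + 1) * σ * ρ) = σ * ρ := by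
      rw [sortStep, if_pos (inv_apply_lt_of_invCount_swap_mul (mul_mem hu'.mem_symGroup hρ)
        (by rw [← mul_assoc, ← hσ]; omega)), ← mul_assoc, ← hσ]
    rw [piWord_cons, map_mul, Module.End.mul_apply, ih hu' (by omega), permRep_piGen_single,
      hasc]

lemma permRep_piBarWord_single_one_sub_mem_supported {ρ : Perm ℕ} {w : List (HIdx n)}
    (hw : IsRedWord n ρ w) :
    permRep n (piBarWord n w) (Finsupp.single 1 1) - Finsupp.single ρ 1 ∈
      Finsupp.supported ℂ ℂ (shorterThan n w.length) := by
  induction w generalizing ρ with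
  | nil => simp [← hw.1]
  | cons i w ih =>
    obtain ⟨hw', hi⟩ := isRedWord_cons_iff.1 hw
    set ρ' := swap i.1 (i.1 + 1) * ρ
    set g := permRep n (piBarWord n w) (Finsupp.single 1 1) - Finsupp.single ρ' 1
    have hstep : permRep n (piGen n i) (Finsupp.single ρ' 1) = Finsupp.single ρ 1 := by
      rw [permRep_piGen_single, sortStep, if_pos (by simpa [ρ'] using hi), swap_mul_self_mul]
    have hsplit : permRep n (piBarWord n (i :: w)) (Finsupp.single 1 1) - Finsupp.single ρ 1 =
        permRep n (piGen n i) g - g - Finsupp.single ρ' 1 := by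
      have hF : permRep n (piBarWord n w) (Finsupp.single 1 1) = g + Finsupp.single ρ' 1 :=
        (sub_add_cancel _ _).symm
      rw [piBarWord_cons, map_mul, Module.End.mul_apply, piBar, map_sub, map_one,
        LinearMap.sub_apply, Module.End.one_apply, hF, map_add, hstep]
      abel
    rw [hsplit, List.length_cons]
    refine sub_mem (sub_mem (permRep_piGen_mem_supported (ih hw') i)
      (Finsupp.supported_mono (shorterThan_mono (Nat.le_succ _)) (ih hw')))
      (Finsupp.single_mem_supported ℂ (1 : ℂ) (show ρ' ∈ shorterThan n (w.length + 1) from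
        ⟨hw'.mem_symGroup, by rw [← hw'.length_eq]; omega⟩))

theorem piWord_mul_piBarWord_ne_zero {σ ρ : Perm ℕ} {u w : List (HIdx n)}
    (hu : IsRedWord n σ u) (hw : IsRedWord n ρ w)
    (hadd : invCount n (σ * ρ) = invCount n σ + invCount n ρ) :
    piWord n u * piBarWord n w ≠ 0 := by
  intro h0
  set g := permRep n (piBarWord n w) (Finsupp.single 1 1) - Finsupp.single ρ 1
  have hsplit : permRep n (piWord n u * piBarWord n w) (Finsupp.single 1 1) =
      Finsupp.single (σ * ρ) 1 + permRep n (piWord n u) g := by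
    rw [map_mul, Module.End.mul_apply, ← sub_add_cancel
      (permRep n (piBarWord n w) (Finsupp.single 1 1)) (Finsupp.single ρ 1), map_add,
      permRep_piWord_single hu hw.mem_symGroup hadd, add_comm]
  have hg : permRep n (piWord n u) g (σ * ρ) = 0 :=
    (Finsupp.mem_supported' _ _).1
      (permRep_piWord_mem_supported (permRep_piBarWord_single_one_sub_mem_supported hw) u) (σ * ρ)
      fun h => by have := h.2; rw [hadd, ← hu.length_eq, ← hw.length_eq] at this; omega
  have := congrArg (· (σ * ρ)) hsplit
  simp [h0, hg] at this

end Representation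

/-- `π_σ · π̄_ρ ≠ 0` iff `ℓ(σρ) = ℓ(σ) + ℓ(ρ)`.  Here `π_σ`
(resp. `π̄_ρ`) is the product of the `π_i` (resp. `π̄_i`) along a reduced
expression `w₁` of `σ` (resp. `w₂` of `ρ`), and the length condition is
expressed via a reduced expression `w₃` of `σρ`. -/
theorem stmt10 (n : ℕ) (σ ρ : Equiv.Perm ℕ) (w₁ w₂ w₃ : List (HIdx n))
    (h₁ : IsRedWord n σ w₁) (h₂ : IsRedWord n ρ w₂) (h₃ : IsRedWord n (σ * ρ) w₃) :
    (w₁.map (piGen n)).prod * (w₂.map (piBar n)).prod ≠ 0 ↔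
      w₃.length = w₁.length + w₂.length := by
  change piWord n w₁ * piBarWord n w₂ ≠ 0 ↔ _
  rw [h₁.length_eq, h₂.length_eq, h₃.length_eq]
  refine ⟨fun hne => ?_, piWord_mul_piBarWord_ne_zero h₁ h₂⟩
  by_contra hne'
  exact hne (piWord_mul_piBarWord_eq_zero h₁ h₂
    (lt_of_le_of_ne (invCount_mul_le σ h₂.mem_symGroup) hne'))
end

section
/- For any composition α of n, the number of standard immaculate tableaux 𝒯 of shape α with Des(𝒯) = set(α) equals 1; the unique such tableau is the super-standard filling 𝒯_α obtained by filling the rows of the composition diagram with 1,2,...,n from left to right and top to bottom. In particular, the coefficient L_{α,α} of F_α in 𝔖*_α equals 1. -/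
/-- `set(α) = {α₁, α₁+α₂, …, α₁+⋯+α_{ℓ(α)-1}}`. -/
def compSet (l : List ℕ) : Finset ℕ :=
  ((List.range (l.length - 1)).map fun i => (l.take (i + 1)).sum).toFinset

/-- The cells of the composition diagram of `α` (0-based `(row, column)`). -/
def sitCells (α : List ℕ) : Set (ℕ × ℕ) :=
  {rc | rc.1 < α.length ∧ rc.2 < α.getD rc.1 0}

/-- A standard immaculate tableau of shape `α`, encoded by the position
`p e = (row, column)` of each entry `e ∈ {1,…,n}`. -/
def IsSIT (n : ℕ) (α : List ℕ) (p : ℕ → ℕ × ℕ) : Prop :=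
  Set.BijOn p (Set.Icc 1 n) (sitCells α) ∧
  (∀ a ∈ Set.Icc 1 n, ∀ b ∈ Set.Icc 1 n,
    (p a).1 = (p b).1 → (p a).2 < (p b).2 → a < b) ∧
  (∀ a ∈ Set.Icc 1 n, ∀ b ∈ Set.Icc 1 n,
    (p a).2 = 0 → (p b).2 = 0 → (p a).1 < (p b).1 → a < b) ∧
  (∀ e : ℕ, e ∉ Set.Icc 1 n → p e = (0, 0))

/-- The descent set of a tableau: `i ∈ {1,…,n-1}` with `i` strictly above `i+1`. -/
def sitDes (n : ℕ) (p : ℕ → ℕ × ℕ) : Finset ℕ :=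
  (Finset.Icc 1 (n - 1)).filter fun i => (p i).1 < (p (i + 1)).1

/-- `p` is the super-standard filling `𝒯_α`: the rows are filled with `1,2,…,n`
from left to right and from top to bottom, i.e. the entry in row `r`, column `c`
is `α₁ + ⋯ + α_r + c + 1` (0-based `r`, `c`). -/
def IsSuperStd (n : ℕ) (α : List ℕ) (p : ℕ → ℕ × ℕ) : Prop :=
  ∀ e ∈ Set.Icc 1 n, e = (α.take (p e).1).sum + (p e).2 + 1

/-! ### Auxiliary material -/

lemma take_sum_mono (l : List ℕ) {i j : ℕ} (h : i ≤ j) :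
    (l.take i).sum ≤ (l.take j).sum := by
  have h1 : (l.take j).take i ++ (l.take j).drop i = l.take j :=
    List.take_append_drop i (l.take j)
  have h2 : (l.take j).take i = l.take i := by
    rw [List.take_take, min_eq_left h]
  have h3 := congrArg List.sum h1
  rw [List.sum_append, h2] at h3
  omega

lemma take_sum_le (l : List ℕ) (i : ℕ) : (l.take i).sum ≤ l.sum := by
  have h1 := congrArg List.sum (List.take_append_drop i l)
  rw [List.sum_append] at h1
  omega

lemma sum_take_succ' (l : List ℕ) {r : ℕ} (h : r < l.length) :
    (l.take (r + 1)).sum = (l.take r).sum + l.getD r 0 := by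
  rw [List.sum_take_succ _ _ h, List.getD_eq_getElem _ _ h]

lemma getD_pos {l : List ℕ} (hpos : ∀ x ∈ l, 0 < x) {r : ℕ} (h : r < l.length) :
    0 < l.getD r 0 := by
  rw [List.getD_eq_getElem _ _ h]
  exact hpos _ (List.getElem_mem h)

/-- The super-standard filling: entry `e` goes in row `r` where `r` is minimal
with `e ≤ α₁+⋯+α_{r+1}`, at column `e - (α₁+⋯+α_r) - 1`. -/
def ssPos (α : List ℕ) (e : ℕ) : ℕ × ℕ :=
  if h : 1 ≤ e ∧ e ≤ α.sum then
    let r := Nat.find (⟨α.length, by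
      rw [List.take_of_length_le (by omega)]; exact h.2⟩ :
        ∃ r, e ≤ (α.take (r + 1)).sum)
    (r, e - (α.take r).sum - 1)
  else (0, 0)

lemma ssPos_def {α : List ℕ} {e : ℕ} (h1 : 1 ≤ e) (h2 : e ≤ α.sum)
    (hex : ∃ r, e ≤ (α.take (r + 1)).sum) :
    ssPos α e = (Nat.find hex, e - (α.take (Nat.find hex)).sum - 1) := by
  rw [ssPos, dif_pos ⟨h1, h2⟩]

lemma ssPos_char {α : List ℕ} {e r c : ℕ}
    (hr : r < α.length) (hc : c < α.getD r 0) (he : e = (α.take r).sum + c + 1) :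
    ssPos α e = (r, c) := by
  have hsucc := sum_take_succ' α hr
  have h1 : 1 ≤ e := by omega
  have h2 : e ≤ α.sum := by
    have := take_sum_le α (r + 1)
    omega
  have hex : ∃ r', e ≤ (α.take (r' + 1)).sum := ⟨r, by omega⟩
  rw [ssPos_def h1 h2 hex]
  have hfind : Nat.find hex = r := by
    rw [Nat.find_eq_iff]
    refine ⟨by omega, fun m hm hle => ?_⟩
    have := take_sum_mono α (show m + 1 ≤ r by omega)
    omega
  rw [hfind]
  exact Prod.ext rfl (by simp; omega)

lemma ssPos_spec {n : ℕ} {α : List ℕ} (hpos : ∀ x ∈ α, 0 < x) (hsum : α.sum = n)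
    {e : ℕ} (h1 : 1 ≤ e) (h2 : e ≤ n) :
    (ssPos α e).1 < α.length ∧ (ssPos α e).2 < α.getD (ssPos α e).1 0 ∧
      e = (α.take (ssPos α e).1).sum + (ssPos α e).2 + 1 := by
  have h2' : e ≤ α.sum := by omega
  have hex : ∃ r, e ≤ (α.take (r + 1)).sum :=
    ⟨α.length, by rw [List.take_of_length_le (by omega)]; omega⟩
  rw [ssPos_def h1 h2' hex]
  set r := Nat.find hex with hrdef
  have hspec : e ≤ (α.take (r + 1)).sum := Nat.find_spec hex
  have hlow : (α.take r).sum < e := by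
    rcases Nat.eq_zero_or_pos r with h0 | h0
    · simp [h0]; omega
    · have hmin := Nat.find_min hex (show r - 1 < r by omega)
      rw [show r - 1 + 1 = r by omega] at hmin
      omega
  have hrlen : r < α.length := by
    by_contra hcon
    push_neg at hcon
    rw [List.take_of_length_le hcon] at hlow
    omega
  have hsucc := sum_take_succ' α hrlen
  refine ⟨hrlen, ?_, ?_⟩
  · show e - (α.take r).sum - 1 < α.getD r 0
    omega
  · show e = (α.take r).sum + (e - (α.take r).sum - 1) + 1
    omega

lemma compSet_mem {α : List ℕ} {x : ℕ} :
    x ∈ compSet α ↔ ∃ j, j + 1 < α.length ∧ x = (α.take (j + 1)).sum := by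
  simp only [compSet, List.mem_toFinset, List.mem_map, List.mem_range]
  constructor
  · rintro ⟨j, hj, rfl⟩; exact ⟨j, by omega, rfl⟩
  · rintro ⟨j, hj, rfl⟩; exact ⟨j, by omega, rfl⟩

lemma ssPos_isSIT {n : ℕ} {α : List ℕ} (hα : IsComposition n α) :
    IsSIT n α (ssPos α) := by
  obtain ⟨hpos, hsum⟩ := hα
  refine ⟨⟨?_, ?_, ?_⟩, ?_, ?_, ?_⟩
  · -- MapsTo
    rintro e ⟨he1, he2⟩
    obtain ⟨h1, h2, _⟩ := ssPos_spec hpos hsum he1 he2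
    exact ⟨h1, h2⟩
  · -- InjOn
    rintro a ⟨ha1, ha2⟩ b ⟨hb1, hb2⟩ hab
    obtain ⟨_, _, ha⟩ := ssPos_spec hpos hsum ha1 ha2
    obtain ⟨_, _, hb⟩ := ssPos_spec hpos hsum hb1 hb2
    rw [hab] at ha
    omega
  · -- SurjOn
    rintro ⟨r, c⟩ hcell
    obtain ⟨hr, hc⟩ : r < α.length ∧ c < α.getD r 0 := hcell
    have hsucc := sum_take_succ' α hr
    have hle := take_sum_le α (r + 1)
    exact ⟨(α.take r).sum + c + 1, ⟨by omega, by omega⟩, ssPos_char hr hc rfl⟩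
  · -- rows increase
    rintro a ⟨ha1, ha2⟩ b ⟨hb1, hb2⟩ hrow hcol
    obtain ⟨_, _, ha⟩ := ssPos_spec hpos hsum ha1 ha2
    obtain ⟨_, _, hb⟩ := ssPos_spec hpos hsum hb1 hb2
    rw [hrow] at ha
    omega
  · -- first column increases
    rintro a ⟨ha1, ha2⟩ b ⟨hb1, hb2⟩ hca hcb hrow
    obtain ⟨hra, _, ha⟩ := ssPos_spec hpos hsum ha1 ha2
    obtain ⟨_, _, hb⟩ := ssPos_spec hpos hsum hb1 hb2
    have hsucc := sum_take_succ' α hra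
    have hmono := take_sum_mono α (show (ssPos α a).1 + 1 ≤ (ssPos α b).1 by omega)
    have hapos := getD_pos hpos hra
    omega
  · -- outside
    intro e he
    rw [Set.mem_Icc] at he
    rw [ssPos, dif_neg (by omega)]

lemma ssPos_des {n : ℕ} {α : List ℕ} (hα : IsComposition n α) :
    sitDes n (ssPos α) = compSet α := by
  obtain ⟨hpos, hsum⟩ := hα
  ext x
  rw [sitDes, Finset.mem_filter, Finset.mem_Icc, compSet_mem]
  constructor
  · rintro ⟨⟨hx1, hx2⟩, hlt⟩
    have hxn : x ≤ n := by omega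
    obtain ⟨hr, hc, hx⟩ := ssPos_spec hpos hsum hx1 hxn
    set r := (ssPos α x).1
    set c := (ssPos α x).2
    have hsucc := sum_take_succ' α hr
    by_cases hend : c + 1 < α.getD r 0
    · exfalso
      have h1 : ssPos α (x + 1) = (r, c + 1) := ssPos_char hr hend (by omega)
      rw [h1] at hlt
      exact absurd hlt (lt_irrefl r)
    · have hx' : x = (α.take (r + 1)).sum := by omega
      have hr1 : r + 1 < α.length := by
        by_contra hcon
        push_neg at hcon
        rw [List.take_of_length_le hcon] at hx'
        omega
      exact ⟨r, hr1, hx'⟩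
  · rintro ⟨j, hj, rfl⟩
    have hjlen : j < α.length := by omega
    have hj1len : j + 1 < α.length := hj
    have hsj := sum_take_succ' α hjlen
    have hsj1 := sum_take_succ' α hj1len
    have hpj := getD_pos hpos hjlen
    have hpj1 := getD_pos hpos hj1len
    have hle := take_sum_le α (j + 1 + 1)
    have h1 : ssPos α ((α.take (j + 1)).sum) = (j, α.getD j 0 - 1) :=
      ssPos_char hjlen (by omega) (by omega)
    have h2 : ssPos α ((α.take (j + 1)).sum + 1) = (j + 1, 0) :=
      ssPos_char hj1len hpj1 (by omega)
    have hmono := take_sum_mono α (show 1 ≤ j + 1 by omega)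
    have hs1 : (α.take 1).sum = α.getD 0 0 := by
      have h0 : 0 < α.length := by omega
      have := sum_take_succ' α h0
      simpa using this
    have hp0 := getD_pos hpos (show 0 < α.length by omega)
    refine ⟨⟨by omega, by omega⟩, ?_⟩
    rw [h1, h2]
    omega

lemma sit_eq_ssPos {n : ℕ} {α : List ℕ} (hα : IsComposition n α)
    {p : ℕ → ℕ × ℕ} (hp : IsSIT n α p) (hdes : sitDes n p = compSet α) :
    ∀ e, 1 ≤ e → e ≤ n → p e = ssPos α e := by
  obtain ⟨hpos, hsum⟩ := hα
  obtain ⟨hbij, hrow, hcol, _⟩ := hp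
  intro e
  induction e using Nat.strong_induction_on with
  | _ e IH =>
  intro he1 hen
  have hecell : p e ∈ sitCells α := hbij.1 (Set.mem_Icc.mpr ⟨he1, hen⟩)
  obtain ⟨hRe, hCe⟩ := hecell
  -- claim A : cells with small filling value are occupied by earlier entries
  have claimA : ∀ b, 1 ≤ b → b ≤ n → ∀ r' c', r' < α.length → c' < α.getD r' 0 →
      (α.take r').sum + c' + 1 < e → p b = (r', c') →
      b = (α.take r').sum + c' + 1 := by
    intro b hb1 hb2 r' c' hr' hc' hlt hpb
    set e' := (α.take r').sum + c' + 1 with he'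
    have he'n : e' ≤ n := by omega
    have hpe' : p e' = ssPos α e' := IH e' (by omega) (by omega) he'n
    have hss : ssPos α e' = (r', c') := ssPos_char hr' hc' rfl
    have heq : p e' = p b := by rw [hpe', hss, hpb]
    exact (hbij.2.1 (Set.mem_Icc.mpr ⟨by omega, he'n⟩)
      (Set.mem_Icc.mpr ⟨hb1, hb2⟩) heq).symm
  rcases Nat.lt_or_ge e 2 with h2 | h2
  · -- base case e = 1
    have he : e = 1 := by omega
    subst he
    have hlen : 0 < α.length := by
      by_contra hcon
      push_neg at hcon
      have hnil : α = [] := List.eq_nil_of_length_eq_zero (by omega)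
      rw [hnil] at hsum
      simp at hsum
      omega
    have ha0 := getD_pos hpos hlen
    have hC0 : (p 1).2 = 0 := by
      by_contra hC
      have hcell : ((p 1).1, 0) ∈ sitCells α := ⟨hRe, show 0 < α.getD (p 1).1 0 by omega⟩
      obtain ⟨b, hb, hpb⟩ := hbij.2.2 hcell
      rw [Set.mem_Icc] at hb
      have := hrow b (Set.mem_Icc.mpr hb) 1 (Set.mem_Icc.mpr ⟨le_refl _, hen⟩)
        (by rw [hpb]) (by rw [hpb]; show 0 < (p 1).2; omega)
      omega
    have hR0 : (p 1).1 = 0 := by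
      by_contra hR
      have hcell : ((0 : ℕ), (0 : ℕ)) ∈ sitCells α := ⟨hlen, ha0⟩
      obtain ⟨b, hb, hpb⟩ := hbij.2.2 hcell
      rw [Set.mem_Icc] at hb
      have := hcol b (Set.mem_Icc.mpr hb) 1 (Set.mem_Icc.mpr ⟨le_refl _, hen⟩)
        (by rw [hpb]) hC0 (by rw [hpb]; show 0 < (p 1).1; omega)
      omega
    have hss : ssPos α 1 = (0, 0) := ssPos_char hlen ha0 (by simp)
    rw [hss]
    exact Prod.ext hR0 hC0
  · -- inductive case e = f + 1, f ≥ 1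
    obtain ⟨f, rfl⟩ : ∃ f, e = f + 1 := ⟨e - 1, by omega⟩
    have hf1 : 1 ≤ f := by omega
    have hfn : f ≤ n := by omega
    have hpf : p f = ssPos α f := IH f (by omega) hf1 hfn
    obtain ⟨hr, hc, hfeq⟩ := ssPos_spec hpos hsum hf1 hfn
    set r := (ssPos α f).1 with hrdef
    set c := (ssPos α f).2 with hcdef
    have hsucc := sum_take_succ' α hr
    have hfIcc : f ∈ Finset.Icc 1 (n - 1) := Finset.mem_Icc.mpr ⟨hf1, by omega⟩
    by_cases hend : c + 1 < α.getD r 0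
    · -- f is not at the end of its row: f is not a descent
      have hnotin : f ∉ compSet α := by
        rw [compSet_mem]
        rintro ⟨j, hjlen, hfj⟩
        have hsuccj := sum_take_succ' α (show j < α.length by omega)
        rcases Nat.lt_or_ge j r with hlt | hge
        · have := take_sum_mono α (show j + 1 ≤ r by omega)
          omega
        · have := take_sum_mono α (show r + 1 ≤ j + 1 by omega)
          omega
      rw [← hdes, sitDes, Finset.mem_filter] at hnotin
      push_neg at hnotin
      have hle : (p (f + 1)).1 ≤ r := by
        have := hnotin hfIcc
        rw [hpf] at this
        omega
      have hReq : (p (f + 1)).1 = r := by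
        by_contra hne
        have hR : (p (f + 1)).1 < r := by omega
        have hsuccR := sum_take_succ' α (show (p (f + 1)).1 < α.length from hRe)
        have hmono := take_sum_mono α (show (p (f + 1)).1 + 1 ≤ r by omega)
        have := claimA (f + 1) (by omega) hen (p (f + 1)).1 (p (f + 1)).2 hRe hCe
          (by omega) rfl
        omega
      have hCeq : (p (f + 1)).2 = c + 1 := by
        have hge : (p (f + 1)).2 ≥ c + 1 := by
          by_contra hlt
          have := claimA (f + 1) (by omega) hen (p (f + 1)).1 (p (f + 1)).2 hRe hCe
            (by rw [hReq]; omega) rfl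
          rw [hReq] at this
          omega
        by_contra hne
        have hgt : c + 1 < (p (f + 1)).2 := by omega
        have hcell : (r, c + 1) ∈ sitCells α := ⟨hr, hend⟩
        obtain ⟨b, hb, hpb⟩ := hbij.2.2 hcell
        rw [Set.mem_Icc] at hb
        have hblt : b < f + 1 := hrow b (Set.mem_Icc.mpr hb)
          (f + 1) (Set.mem_Icc.mpr ⟨by omega, hen⟩)
          (by rw [hpb, hReq]) (by rw [hpb]; omega)
        have hpb' : p b = ssPos α b := IH b (by omega) hb.1 hb.2
        have hss : ssPos α b = (r, c + 1) := by rw [← hpb', hpb]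
        have hb1 : (ssPos α b).1 = r := by rw [hss]
        have hb2 : (ssPos α b).2 = c + 1 := by rw [hss]
        obtain ⟨_, _, hbeq⟩ := ssPos_spec hpos hsum hb.1 hb.2
        rw [hb1, hb2] at hbeq
        omega
      have hss : ssPos α (f + 1) = (r, c + 1) := ssPos_char hr hend (by omega)
      rw [hss]
      exact Prod.ext hReq hCeq
    · -- f is at the end of its row: f is a descent
      have hcend : c + 1 = α.getD r 0 := by omega
      have hfval : f = (α.take (r + 1)).sum := by omega
      have hr1 : r + 1 < α.length := by
        by_contra hcon
        push_neg at hcon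
        rw [List.take_of_length_le hcon] at hfval
        omega
      have har1 := getD_pos hpos hr1
      have hsucc1 := sum_take_succ' α hr1
      have hin : f ∈ compSet α := compSet_mem.mpr ⟨r, hr1, hfval⟩
      rw [← hdes, sitDes, Finset.mem_filter] at hin
      have hdesc : r < (p (f + 1)).1 := by
        have := hin.2
        rw [hpf] at this
        exact this
      have hCeq : (p (f + 1)).2 = 0 := by
        by_contra hC
        have hcell : ((p (f + 1)).1, 0) ∈ sitCells α :=
          ⟨hRe, show 0 < α.getD (p (f + 1)).1 0 by omega⟩
        obtain ⟨b, hb, hpb⟩ := hbij.2.2 hcell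
        rw [Set.mem_Icc] at hb
        have hblt : b < f + 1 := hrow b (Set.mem_Icc.mpr hb)
          (f + 1) (Set.mem_Icc.mpr ⟨by omega, hen⟩)
          (by rw [hpb]) (by rw [hpb]; show 0 < (p (f + 1)).2; omega)
        -- b ≤ f, so p b = ssPos α b, whose row satisfies S_{row} < b
        have hpb' : p b = ssPos α b := IH b (by omega) hb.1 hb.2
        obtain ⟨hrb, hcb, hbeq⟩ := ssPos_spec hpos hsum hb.1 hb.2
        rw [hpb'] at hpb
        have hrowb : (ssPos α b).1 = (p (f + 1)).1 := by rw [hpb]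
        have hmono := take_sum_mono α (show r + 1 ≤ (ssPos α b).1 by omega)
        omega
      have hReq : (p (f + 1)).1 = r + 1 := by
        by_contra hne
        have hgt : r + 1 < (p (f + 1)).1 := by omega
        have hcell : (r + 1, (0 : ℕ)) ∈ sitCells α := ⟨hr1, har1⟩
        obtain ⟨b, hb, hpb⟩ := hbij.2.2 hcell
        rw [Set.mem_Icc] at hb
        have hblt : b < f + 1 := hcol b (Set.mem_Icc.mpr hb)
          (f + 1) (Set.mem_Icc.mpr ⟨by omega, hen⟩)
          (by rw [hpb]) hCeq (by rw [hpb]; show r + 1 < (p (f + 1)).1; omega)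
        have hpb' : p b = ssPos α b := IH b (by omega) hb.1 hb.2
        have hss2 : ssPos α b = (r + 1, 0) := by rw [← hpb', hpb]
        have hb1 : (ssPos α b).1 = r + 1 := by rw [hss2]
        have hb2 : (ssPos α b).2 = 0 := by rw [hss2]
        obtain ⟨_, _, hbeq⟩ := ssPos_spec hpos hsum hb.1 hb.2
        rw [hb1, hb2] at hbeq
        omega
      have hss : ssPos α (f + 1) = (r + 1, 0) := ssPos_char hr1 har1 (by omega)
      rw [hss]
      exact Prod.ext hReq hCeq

/-- there is exactly one standard immaculate tableau of shape `α`
with descent set `set(α)`, namely the super-standard tableau `𝒯_α`; in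
particular `L_{α,α} = 1`. -/
theorem stmt13 (n : ℕ) (α : List ℕ) (hα : IsComposition n α) :
    (∃! T : {p : ℕ → ℕ × ℕ // IsSIT n α p}, sitDes n T.1 = compSet α) ∧
    (∀ T : {p : ℕ → ℕ × ℕ // IsSIT n α p},
      sitDes n T.1 = compSet α → IsSuperStd n α T.1) := by
  constructor
  · refine ⟨⟨ssPos α, ssPos_isSIT hα⟩, ssPos_des hα, ?_⟩
    rintro ⟨p, hp⟩ hdes
    have key := sit_eq_ssPos hα hp hdes
    apply Subtype.ext
    funext e
    by_cases he : e ∈ Set.Icc 1 n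
    · rw [Set.mem_Icc] at he
      exact key e he.1 he.2
    · show p e = ssPos α e
      rw [hp.2.2.2 e he, (ssPos_isSIT hα).2.2.2 e he]
  · rintro ⟨p, hp⟩ hdes e he
    rw [Set.mem_Icc] at he
    have key := sit_eq_ssPos hα hp hdes e he.1 he.2
    show e = (α.take (p e).1).sum + (p e).2 + 1
    rw [key]
    exact (ssPos_spec hα.1 hα.2 he.1 he.2).2.2
end

section
/- If 𝒯 is a standard immaculate tableau of shape α with comp(Des(𝒯)) = β, then β ≤_l α in the lexicographic order. Consequently, L_{α,β} = 0 unless β ≤_l α. -/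
/-- `comp(I) = (i₁, i₂ - i₁, …, n - i_k)` for `I = {i₁ < ⋯ < i_k} ⊆ {1,…,n-1}`. -/
def compOf (n : ℕ) (I : Finset ℕ) : List ℕ :=
  if n = 0 then []
  else List.zipWith (fun a b => a - b) (I.sort (· ≤ ·) ++ [n]) (0 :: I.sort (· ≤ ·))

/-!
Compare `𝒯` with the superstandard tableau of shape `α`, and let `m` be maximal such that the two
agree on `1, …, m`. Below `m` the descents of `𝒯` are those of the superstandard tableau, namely
the partial sums `α₁ + ⋯ + α_j`. If `m < n`, the row and first-column conditions force `m + 1`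
into its superstandard cell unless `m` is a descent of `𝒯` that is not a partial sum. So the
first difference between `Des(𝒯)` and the partial sums of `α` is an extra descent of `𝒯`, which
ends a part of `comp(Des(𝒯))` early and makes it lexicographically smaller than `α`.
-/

theorem List.lex_zipWith_sub_of_lt {c x y : ℕ} {L R R' R₁ R₂ : List ℕ}
    (hL : ∀ a ∈ c :: L, a ≤ x) (hxy : x < y) :
    List.Lex (· < ·) (List.zipWith (· - ·) (L ++ x :: R) (c :: (L ++ R₁)))
      (List.zipWith (· - ·) (L ++ y :: R') (c :: (L ++ R₂))) := by
  induction L generalizing c with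
  | nil =>
    have hc : c ≤ x := hL c List.mem_cons_self
    exact List.Lex.rel (show x - c < y - c by omega)
  | cons a L ih =>
    exact List.Lex.cons (ih fun b hb => hL b (List.mem_cons_of_mem c hb))

theorem Finset.sort_eq_sort_filter_lt_append {β : Type*} [LinearOrder β] (s : Finset β) (m : β) :
    s.sort = (s.filter (· < m)).sort ++ (s.filter (m ≤ ·)).sort := by
  set l := (s.filter (· < m)).sort ++ (s.filter (m ≤ ·)).sort
  have hl : l.Pairwise (· < ·) := by
    refine List.pairwise_append.2 ⟨(sortedLT_sort _).pairwise, (sortedLT_sort _).pairwise, ?_⟩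
    intro a ha b hb
    simp only [mem_sort, mem_filter] at ha hb
    exact ha.2.trans_le hb.2
  have hls : l.toFinset = s := by
    ext a
    simp only [l, List.mem_toFinset, List.mem_append, mem_sort, mem_filter]
    constructor
    · rintro (h | h) <;> exact h.1
    · intro ha
      exact (lt_or_ge a m).imp (⟨ha, ·⟩) (⟨ha, ·⟩)
  rw [← (List.toFinset_sort _ hl.nodup).2 (hl.imp le_of_lt), hls]

theorem compOf_lex_of_min_mem {D E : Finset ℕ} {m n : ℕ} (hmD : m ∈ D) (hmE : m ∉ E)
    (hagree : ∀ i < m, i ∈ D ↔ i ∈ E) (hmn : m < n) :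
    List.Lex (· < ·) (compOf n D) (compOf n E) := by
  have hfilter : E.filter (· < m) = D.filter (· < m) := by
    ext i
    simp only [Finset.mem_filter]
    exact ⟨fun h => ⟨(hagree i h.2).2 h.1, h.2⟩, fun h => ⟨(hagree i h.2).1 h.1, h.2⟩⟩
  have hinsert : D.filter (m ≤ ·) = insert m (D.filter (m < ·)) := by
    ext i
    simp only [Finset.mem_filter, Finset.mem_insert]
    constructor
    · rintro ⟨hi, hmi⟩
      rcases hmi.eq_or_lt with rfl | h
      exacts [Or.inl rfl, Or.inr ⟨hi, h⟩]
    · rintro (rfl | ⟨hi, h⟩)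
      exacts [⟨hmD, le_rfl⟩, ⟨hi, h.le⟩]
  have hD : D.sort = (D.filter (· < m)).sort ++ m :: (D.filter (m < ·)).sort := by
    rw [D.sort_eq_sort_filter_lt_append m, hinsert,
      Finset.sort_insert _ (fun b hb => (Finset.mem_filter.1 hb).2.le) (by simp)]
  obtain ⟨y, R, hyR⟩ : ∃ y R, (E.filter (m ≤ ·)).sort (· ≤ ·) ++ [n] = y :: R :=
    List.exists_cons_of_ne_nil (by simp)
  have hmy : m < y := by
    have hy : y ∈ (E.filter (m ≤ ·)).sort (· ≤ ·) ++ [n] := hyR ▸ List.mem_cons_self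
    simp only [List.mem_append, Finset.mem_sort, Finset.mem_filter, List.mem_singleton] at hy
    rcases hy with ⟨hyE, hmy⟩ | rfl
    exacts [lt_of_le_of_ne hmy (fun h => hmE (h ▸ hyE)), hmn]
  rw [compOf, compOf, if_neg (by omega), if_neg (by omega), hD, E.sort_eq_sort_filter_lt_append m,
    hfilter, List.append_assoc, List.append_assoc, hyR, List.cons_append]
  refine List.lex_zipWith_sub_of_lt (fun a ha => ?_) hmy
  simp only [List.mem_cons, Finset.mem_sort, Finset.mem_filter] at ha
  omega

def partialSum (α : List ℕ) (k : ℕ) : ℕ := (α.take k).sum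

def partialSums (α : List ℕ) : Finset ℕ :=
  ((List.range' 1 (α.length - 1)).map (partialSum α)).toFinset

section PartialSum

variable {n : ℕ} {α : List ℕ}

theorem partialSum_zero (α : List ℕ) : partialSum α 0 = 0 := rfl

theorem partialSum_monotone (α : List ℕ) : Monotone (partialSum α) :=
  List.monotone_sum_take α

theorem partialSum_succ (α : List ℕ) (k : ℕ) :
    partialSum α (k + 1) = partialSum α k + α.getD k 0 := by
  rcases lt_or_ge k α.length with hk | hk
  · rw [partialSum, partialSum, List.sum_take_succ _ _ hk, List.getD_eq_getElem _ _ hk]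
  · rw [partialSum, partialSum, List.take_of_length_le hk, List.take_of_length_le (by omega),
      List.getD_eq_default _ _ hk, add_zero]

theorem partialSum_length (hα : IsComposition n α) : partialSum α α.length = n := by
  rw [partialSum, List.take_length, hα.2]

theorem IsComposition.getD_pos (hα : IsComposition n α) {k : ℕ} (hk : k < α.length) :
    0 < α.getD k 0 := by
  rw [List.getD_eq_getElem _ _ hk]
  exact hα.1 _ (List.getElem_mem hk)

theorem partialSum_lt_partialSum (hα : IsComposition n α) {j k : ℕ} (hjk : j < k)
    (hk : k ≤ α.length) : partialSum α j < partialSum α k :=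
  calc partialSum α j < partialSum α j + α.getD j 0 := by
        have := hα.getD_pos (show j < α.length by omega); omega
    _ = partialSum α (j + 1) := (partialSum_succ α j).symm
    _ ≤ partialSum α k := partialSum_monotone α hjk

theorem exists_mem_Ioc_partialSum (α : List ℕ) {e : ℕ} (he : 0 < e) :
    ∀ {k}, e ≤ partialSum α k → ∃ j < k, e ∈ Set.Ioc (partialSum α j) (partialSum α (j + 1))
  | 0, h => by rw [partialSum_zero] at h; omega
  | k + 1, h => by
    by_cases hk : e ≤ partialSum α k
    · obtain ⟨j, hj, hje⟩ := exists_mem_Ioc_partialSum α he hk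
      exact ⟨j, by omega, hje⟩
    · exact ⟨k, by omega, by omega, h⟩

theorem eq_of_mem_Ioc_partialSum {j j' e : ℕ}
    (hj : e ∈ Set.Ioc (partialSum α j) (partialSum α (j + 1)))
    (hj' : e ∈ Set.Ioc (partialSum α j') (partialSum α (j' + 1))) : j = j' := by
  by_contra hne
  rcases Nat.lt_or_gt_of_ne hne with h | h
  · have := partialSum_monotone α (show j + 1 ≤ j' by omega)
    exact absurd (hj'.1.trans_le hj.2) (by omega)
  · have := partialSum_monotone α (show j' + 1 ≤ j by omega)
    exact absurd (hj.1.trans_le hj'.2) (by omega)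

theorem mem_partialSums {i : ℕ} :
    i ∈ partialSums α ↔ ∃ j, 0 < j ∧ j < α.length ∧ partialSum α j = i := by
  simp only [partialSums, List.mem_toFinset, List.mem_map, List.mem_range'_1]
  constructor
  · rintro ⟨j, hj, rfl⟩
    exact ⟨j, by omega, by omega, rfl⟩
  · rintro ⟨j, hj₀, hj, rfl⟩
    exact ⟨j, by omega, rfl⟩

theorem mem_partialSums_Ioo (hα : IsComposition n α) {i : ℕ} (hi : i ∈ partialSums α) :
    i ∈ Set.Ioo 0 n := by
  obtain ⟨j, hj₀, hj, rfl⟩ := mem_partialSums.1 hi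
  rw [← partialSum_zero α, ← partialSum_length hα]
  exact ⟨partialSum_lt_partialSum hα hj₀ hj.le, partialSum_lt_partialSum hα hj le_rfl⟩

theorem compOf_partialSums (hα : IsComposition n α) : compOf n (partialSums α) = α := by
  rcases Nat.eq_zero_or_pos n with rfl | hn
  · rw [compOf, if_pos rfl]
    rcases α with _ | ⟨a, l⟩
    · rfl
    · have ha := hα.1 a List.mem_cons_self
      have hsum := hα.2
      rw [List.sum_cons] at hsum
      omega
  obtain ⟨k, hk⟩ : ∃ k, α.length = k + 1 := by
    refine Nat.exists_eq_add_one.2 (List.length_pos_of_ne_nil ?_)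
    rintro rfl
    exact hn.ne' hα.2.symm
  have hsorted : ((List.range' 1 k).map (partialSum α)).Pairwise (· < ·) :=
    List.pairwise_map.2 <| (List.pairwise_lt_range' 1).imp_of_mem fun _ hb hab =>
      partialSum_lt_partialSum hα hab (by rw [List.mem_range'_1] at hb; omega)
  have hsort : (partialSums α).sort (· ≤ ·) = (List.range' 1 k).map (partialSum α) := by
    rw [partialSums, hk, Nat.add_sub_cancel]
    exact (List.toFinset_sort _ hsorted.nodup).2 (hsorted.imp le_of_lt)
  have hupper : (List.range' 1 k).map (partialSum α) ++ [n] =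
      (List.range' 1 (k + 1)).map (partialSum α) := by
    rw [List.range'_concat, List.map_append, List.map_singleton, ← partialSum_length hα, hk]
    ring_nf
  have hlower : 0 :: (List.range' 1 k).map (partialSum α) =
      (List.range' 0 (k + 1)).map (partialSum α) := by
    rw [List.range'_succ, List.map_cons, partialSum_zero]
  rw [compOf, if_neg hn.ne', hsort, hupper, hlower]
  apply List.ext_getElem (by simp [hk])
  intro i hi hiα
  simp only [List.getElem_zipWith, List.getElem_map, List.getElem_range', zero_add, one_mul,
    add_comm 1 i, partialSum_succ, List.getD_eq_getElem _ _ hiα, Nat.add_sub_cancel_left]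

end PartialSum

theorem mem_sitDes {n i : ℕ} {p : ℕ → ℕ × ℕ} :
    i ∈ sitDes n p ↔ (1 ≤ i ∧ i ≤ n - 1) ∧ (p i).1 < (p (i + 1)).1 := by
  rw [sitDes, Finset.mem_filter, Finset.mem_Icc]

/-- `p` agrees on `1, …, m` with the superstandard tableau of shape `α`, the one filling its rows
with `1, 2, …, n` in reading order. -/
def IsSuperstandardUpTo (α : List ℕ) (p : ℕ → ℕ × ℕ) (m : ℕ) : Prop :=
  ∀ j, ∀ e ∈ Set.Ioc (partialSum α j) (partialSum α (j + 1)), e ≤ m →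
    p e = (j, e - partialSum α j - 1)

theorem isSuperstandardUpTo_zero (α : List ℕ) (p : ℕ → ℕ × ℕ) : IsSuperstandardUpTo α p 0 := by
  intro j e he hem
  have := he.1
  omega

section Tableau

variable {n m : ℕ} {α : List ℕ} {p : ℕ → ℕ × ℕ}

theorem IsSIT.exists_first_column_le (hα : IsComposition n α) (hp : IsSIT n α p) {e : ℕ}
    (he : e ∈ Set.Icc 1 n) : ∃ z ∈ Set.Icc 1 n, p z = ((p e).1, 0) ∧ z ≤ e := by
  obtain ⟨hr, -⟩ := hp.1.mapsTo he
  obtain ⟨z, hz, hpz⟩ :=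
    hp.1.surjOn (show ((p e).1, 0) ∈ sitCells α from ⟨hr, hα.getD_pos hr⟩)
  refine ⟨z, hz, hpz, ?_⟩
  rcases Nat.eq_zero_or_pos (p e).2 with h | h
  · exact (hp.1.injOn hz he (by rw [hpz, ← h])).le
  · exact (hp.2.1 z hz e he (by rw [hpz]) (by rw [hpz]; exact h)).le

namespace IsSuperstandardUpTo

theorem apply_cell (hm : IsSuperstandardUpTo α p m) {r c : ℕ} (hc : c < α.getD r 0)
    (hrc : partialSum α r + c < m) : p (partialSum α r + c + 1) = (r, c) := by
  rw [hm r _ ⟨by omega, by rw [partialSum_succ]; omega⟩ (by omega)]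
  congr 1
  omega

theorem lt_iff_le_partialSum_add (hα : IsComposition n α) (hp : IsSIT n α p)
    (hm : IsSuperstandardUpTo α p m) {e : ℕ} (he : e ∈ Set.Icc 1 n) :
    m < e ↔ m ≤ partialSum α (p e).1 + (p e).2 := by
  obtain ⟨he₁, hen⟩ := he
  constructor
  · intro hme
    by_contra! h
    obtain ⟨-, hc⟩ := hp.1.mapsTo ⟨he₁, hen⟩
    have hcell : p (partialSum α (p e).1 + (p e).2 + 1) = p e := hm.apply_cell hc h
    have := hp.1.injOn ⟨by omega, by omega⟩ ⟨he₁, hen⟩ hcell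
    omega
  · intro h
    by_contra! hem
    obtain ⟨j, -, hj⟩ := exists_mem_Ioc_partialSum α he₁ (k := α.length)
      (by rwa [partialSum_length hα])
    rw [hm j e hj hem] at h
    have := hj.1
    dsimp only at h
    omega

theorem mem_sitDes_iff (hα : IsComposition n α) (hm : IsSuperstandardUpTo α p m) (hmn : m ≤ n)
    {i : ℕ} (hi : i < m) : i ∈ sitDes n p ↔ i ∈ partialSums α := by
  rcases Nat.eq_zero_or_pos i with rfl | hi₀
  · exact iff_of_false (fun h => by have := (mem_sitDes.1 h).1.1; omega)
      (fun h => (mem_partialSums_Ioo hα h).1.ne rfl)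
  have hmono := partialSum_monotone α
  obtain ⟨j, -, hj⟩ := exists_mem_Ioc_partialSum α hi₀ (k := α.length)
    (by rw [partialSum_length hα]; omega)
  obtain ⟨j', -, hj'⟩ := exists_mem_Ioc_partialSum α (Nat.succ_pos i) (k := α.length)
    (by rw [partialSum_length hα]; omega)
  rw [mem_sitDes, hm j i hj hi.le, hm j' (i + 1) hj' hi, mem_partialSums]
  constructor
  · rintro ⟨-, hjj' : j < j'⟩
    have : partialSum α (j + 1) ≤ partialSum α j' := hmono hjj'
    have hi_eq : partialSum α (j + 1) = i := by have := hj.2; have := hj'.1; omega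
    refine ⟨j + 1, by omega, hmono.reflect_lt ?_, hi_eq⟩
    rw [partialSum_length hα]
    omega
  · rintro ⟨t, -, -, rfl⟩
    refine ⟨⟨by omega, by omega⟩, ?_⟩
    by_contra! h
    have hjt : j < t := hmono.reflect_lt hj.1
    have := hmono (show j' + 1 ≤ t by omega)
    have := hj'.2
    omega

theorem succ_row_eq (hα : IsComposition n α) (hp : IsSIT n α p)
    (hm : IsSuperstandardUpTo α p m) (hmn : m < n) (hdes : m ∉ sitDes n p ∨ ∃ k, partialSum α k = m)
    {k c : ℕ} (hc : c < α.getD k 0) (hkc : partialSum α k + c = m) : (p (m + 1)).1 = k := by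
  have hkℓ : k < α.length := by
    by_contra! h
    rw [List.getD_eq_default _ _ h] at hc
    omega
  obtain ⟨x, hx, hpx⟩ := hp.1.surjOn (show (k, c) ∈ sitCells α from ⟨hkℓ, hc⟩)
  have hmx : m < x := (hm.lt_iff_le_partialSum_add hα hp hx).2 (by rw [hpx]; dsimp only; omega)
  have hy : m + 1 ∈ Set.Icc 1 n := ⟨by omega, hmn⟩
  apply le_antisymm
  · by_contra! hkr
    rcases Nat.eq_zero_or_pos c with hc0 | hc0
    -- `m + 1` would lie below the first-column entry `x` of row `k`
    · obtain ⟨z, hz, hpz, hzy⟩ := hp.exists_first_column_le hα hy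
      have := hp.2.2.1 x hx z hz (by rw [hpx]; exact hc0) (by rw [hpz])
        (by rw [hpx, hpz]; exact hkr)
      omega
    -- `m` sits at `(k, c - 1)`, so `m + 1` in a lower row makes `m` a descent
    · refine hdes.elim (fun hmD => hmD (mem_sitDes.2 ⟨⟨by omega, by omega⟩, ?_⟩)) ?_
      · have hpm := hm.apply_cell (r := k) (c := c - 1) (by omega) (by omega)
        rw [show partialSum α k + (c - 1) + 1 = m by omega] at hpm
        rw [hpm]
        exact hkr
      · rintro ⟨k', hk'⟩
        rcases le_or_gt k' k with h | h
        · have := partialSum_monotone α h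
          omega
        · have := partialSum_monotone α (show k + 1 ≤ k' by omega)
          rw [partialSum_succ] at this
          omega
  · by_contra! hrk
    obtain ⟨-, hc'⟩ := hp.1.mapsTo hy
    have := (hm.lt_iff_le_partialSum_add hα hp hy).1 (by omega)
    have := partialSum_monotone α (show (p (m + 1)).1 + 1 ≤ k by omega)
    rw [partialSum_succ] at this
    omega

theorem succ (hα : IsComposition n α) (hp : IsSIT n α p) (hm : IsSuperstandardUpTo α p m)
    (hmn : m < n) (hdes : m ∉ sitDes n p ∨ ∃ k, partialSum α k = m) :
    IsSuperstandardUpTo α p (m + 1) := by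
  obtain ⟨k, hkℓ, hk⟩ := exists_mem_Ioc_partialSum α (Nat.succ_pos m) (k := α.length)
    (by rw [partialSum_length hα]; omega)
  have hk₁ := hk.1
  have hk₂ := hk.2
  rw [partialSum_succ] at hk₂
  set c := m - partialSum α k
  have hc : c < α.getD k 0 := by omega
  have hrow := hm.succ_row_eq hα hp hmn hdes hc (by omega)
  obtain ⟨x, hx, hpx⟩ := hp.1.surjOn (show (k, c) ∈ sitCells α from ⟨hkℓ, hc⟩)
  have hmx : m < x := (hm.lt_iff_le_partialSum_add hα hp hx).2 (by rw [hpx]; dsimp only; omega)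
  have hy : m + 1 ∈ Set.Icc 1 n := ⟨by omega, hmn⟩
  have hcol : (p (m + 1)).2 = c := by
    apply le_antisymm
    · by_contra! hcc
      have := hp.2.1 x hx (m + 1) hy (by rw [hpx, hrow]) (by rw [hpx]; exact hcc)
      omega
    · have := (hm.lt_iff_le_partialSum_add hα hp hy).1 (by omega)
      rw [hrow] at this
      omega
  intro j e he hem
  rcases hem.lt_or_eq with hem | rfl
  · exact hm j e he (by omega)
  · obtain rfl := eq_of_mem_Ioc_partialSum he hk
    rw [Prod.ext_iff, hrow, hcol]
    omega

end IsSuperstandardUpTo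

end Tableau

/-- if `𝒯` is a standard immaculate tableau of shape `α` with
descent composition `β = comp(Des(𝒯))`, then `β ≤_l α` in the lexicographic
order (so `L_{α,β} = 0` unless `β ≤_l α`). -/
theorem stmt14 (n : ℕ) (α : List ℕ) (hα : IsComposition n α)
    (T : {p : ℕ → ℕ × ℕ // IsSIT n α p}) :
    compOf n (sitDes n T.1) = α ∨ List.Lex (· < ·) (compOf n (sitDes n T.1)) α := by
  classical
  obtain ⟨p, hp⟩ := T
  dsimp only
  set m := Nat.findGreatest (IsSuperstandardUpTo α p) n
  have hm : IsSuperstandardUpTo α p m :=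
    Nat.findGreatest_spec (Nat.zero_le n) (isSuperstandardUpTo_zero α p)
  have hmn : m ≤ n := Nat.findGreatest_le n
  have hagree : ∀ i < m, i ∈ sitDes n p ↔ i ∈ partialSums α :=
    fun i => hm.mem_sitDes_iff hα hmn
  rw [← compOf_partialSums hα]
  rcases hmn.lt_or_eq with hmn | hmn
  · have hnext : ¬IsSuperstandardUpTo α p (m + 1) :=
      Nat.findGreatest_is_greatest (Nat.lt_succ_self m) hmn
    have hmD : m ∈ sitDes n p := by_contra fun h => hnext (hm.succ hα hp hmn (Or.inl h))
    have hmS : m ∉ partialSums α := fun h =>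
      have ⟨k, _, _, hk⟩ := mem_partialSums.1 h
      hnext (hm.succ hα hp hmn (Or.inr ⟨k, hk⟩))
    exact Or.inr (compOf_lex_of_min_mem hmD hmS hagree hmn)
  · refine Or.inl (congrArg _ (Finset.ext fun i => ?_))
    rcases lt_or_ge i n with hi | hi
    · exact hagree i (hmn ▸ hi)
    · exact iff_of_false (fun h => by obtain ⟨⟨h₁, h₂⟩, -⟩ := mem_sitDes.1 h; omega)
        (fun h => (mem_partialSums_Ioo hα h).2.not_ge hi)
end

section
/- Let 𝛂 be a generalized composition of n with ribbon diagram rd(𝛂). The action on the ℂ-span of standard ribbon tableaux of shape 𝛂 given by: π_i·T = T if i is not a descent of T; π_i·T = 0 if i and i+1 lie in the same row of T; and π_i·T = s_i·T if i appears strictly below i+1 in T, satisfies the defining relations of H_n(0). -/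
/-- The cells of the ribbon diagram of a composition `α`, as pairs
`(column, height)` (0-based columns from the left, heights increasing upward):
column `j` occupies the heights `[(α₁+⋯+α_j) - j, (α₁+⋯+α_{j+1}) - j - 1]`,
so that consecutive columns overlap in exactly one row, each column sitting
above-right of the previous one. -/
def ribbonCells (α : List ℕ) : Set (ℕ × ℕ) :=
  {jh | jh.1 < α.length ∧ (α.take jh.1).sum - jh.1 ≤ jh.2 ∧
        jh.2 < (α.take jh.1).sum - jh.1 + α.getD jh.1 0}

/-- Column offset of the `m`-th component of a generalized ribbon diagram. -/
def colOff (L : List (List ℕ)) (m : ℕ) : ℕ := ((L.take m).map List.length).sum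

/-- Height offset of the `m`-th component of a generalized ribbon diagram
(each component is placed strictly to the northeast of the previous one,
one row above its top). -/
def htOff (L : List (List ℕ)) (m : ℕ) : ℕ :=
  ((L.take m).map fun l => l.sum - l.length + 1).sum

/-- The cells of the generalized ribbon diagram of `𝛂 = α⁽¹⁾ ⊕ ⋯ ⊕ α⁽ᵏ⁾`. -/
def gribbonCells (L : List (List ℕ)) : Set (ℕ × ℕ) :=
  {jh | ∃ m < L.length, ∃ c ∈ ribbonCells (L.getD m []),
    jh = (colOff L m + c.1, htOff L m + c.2)}

/-- The size `n` of the generalized composition `𝛂`. -/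
def srtSize (L : List (List ℕ)) : ℕ := (L.map List.sum).sum

/-- A standard ribbon tableau of shape `𝛂`, encoded by the position
`p e = (column, height)` of each entry `e ∈ {1,…,n}` (heights increase upward):
entries fill the diagram bijectively, increase from left to right in each row
(cells of equal height), and increase from top to bottom in each column
(i.e. decrease with height).  (Entries outside `{1,…,n}` are normalized.) -/
def IsSRT (L : List (List ℕ)) (p : ℕ → ℕ × ℕ) : Prop :=
  Set.BijOn p (Set.Icc 1 (srtSize L)) (gribbonCells L) ∧
  (∀ a ∈ Set.Icc 1 (srtSize L), ∀ b ∈ Set.Icc 1 (srtSize L),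
    (p a).2 = (p b).2 → (p a).1 < (p b).1 → a < b) ∧
  (∀ a ∈ Set.Icc 1 (srtSize L), ∀ b ∈ Set.Icc 1 (srtSize L),
    (p a).1 = (p b).1 → (p b).2 < (p a).2 → a < b) ∧
  (∀ e : ℕ, e ∉ Set.Icc 1 (srtSize L) → p e = (0, 0))

section Aux
variable {L : List (List ℕ)}

lemma cols_ne {p : ℕ → ℕ × ℕ} (hp : IsSRT L p) {i : ℕ} (hi1 : 1 ≤ i)
    (hi2 : i + 1 ≤ srtSize L) (hlt : (p i).2 < (p (i+1)).2) :
    (p i).1 ≠ (p (i+1)).1 := by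
  intro hc
  have := hp.2.2.1 (i+1) ⟨by omega, hi2⟩ i ⟨hi1, by omega⟩ hc.symm hlt
  omega

lemma swap_lt {i a b : ℕ} (hab : a < b) (hne : ¬(a = i ∧ b = i + 1)) :
    Equiv.swap i (i+1) a < Equiv.swap i (i+1) b := by
  rw [Equiv.swap_apply_def, Equiv.swap_apply_def]
  split_ifs <;> omega

lemma isSRT_swap {p : ℕ → ℕ × ℕ} (hp : IsSRT L p) {i : ℕ} (hi1 : 1 ≤ i)
    (hi2 : i + 1 ≤ srtSize L) (hlt : (p i).2 < (p (i+1)).2) :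
    IsSRT L (p ∘ Equiv.swap i (i+1)) := by
  obtain ⟨hbij, hrow, hcol, hout⟩ := hp
  have hmem : ∀ x ∈ Set.Icc 1 (srtSize L),
      Equiv.swap i (i+1) x ∈ Set.Icc 1 (srtSize L) := by
    intro x hx
    simp only [Set.mem_Icc] at hx ⊢
    rw [Equiv.swap_apply_def]
    split_ifs <;> omega
  have hσ : Set.BijOn (Equiv.swap i (i+1)) (Set.Icc 1 (srtSize L))
      (Set.Icc 1 (srtSize L)) := by
    refine ⟨hmem, (Equiv.injective _).injOn, fun y hy => ?_⟩
    exact ⟨Equiv.swap i (i+1) y, hmem y hy, Equiv.swap_apply_self i (i+1) y⟩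
  refine ⟨hbij.comp hσ, ?_, ?_, ?_⟩
  · intro a ha b hb h2 h1
    have h3 := hrow _ (hmem a ha) _ (hmem b hb) h2 h1
    have hne : ¬(Equiv.swap i (i+1) a = i ∧ Equiv.swap i (i+1) b = i + 1) := by
      rintro ⟨e1, e2⟩
      rw [Function.comp_apply, Function.comp_apply, e1, e2] at h2
      omega
    have := swap_lt h3 hne
    rwa [Equiv.swap_apply_self, Equiv.swap_apply_self] at this
  · intro a ha b hb h2 h1
    have h3 := hcol _ (hmem a ha) _ (hmem b hb) h2 h1
    have hne : ¬(Equiv.swap i (i+1) a = i ∧ Equiv.swap i (i+1) b = i + 1) := by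
      rintro ⟨e1, e2⟩
      rw [Function.comp_apply, Function.comp_apply, e1, e2] at h2
      exact cols_ne ⟨hbij, hrow, hcol, hout⟩ hi1 hi2 hlt h2
    have := swap_lt h3 hne
    rwa [Equiv.swap_apply_self, Equiv.swap_apply_self] at this
  · intro e he
    have h1 : e ≠ i := by rintro rfl; exact he ⟨hi1, by omega⟩
    have h2 : e ≠ i + 1 := by rintro rfl; exact he ⟨by omega, hi2⟩
    rw [Function.comp_apply, Equiv.swap_apply_of_ne_of_ne h1 h2]
    exact hout e he

end Aux


section Ops
variable (L : List (List ℕ))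

def swapT (i : HIdx (srtSize L)) (T : {p : ℕ → ℕ × ℕ // IsSRT L p})
    (h : (T.1 i.1).2 < (T.1 (i.1+1)).2) : {p : ℕ → ℕ × ℕ // IsSRT L p} :=
  ⟨T.1 ∘ Equiv.swap i.1 (i.1+1), isSRT_swap T.2 i.2.1 i.2.2 h⟩

@[simp] lemma swapT_apply (i : HIdx (srtSize L)) (T) (h) (x : ℕ) :
    (swapT L i T h).1 x = T.1 (Equiv.swap i.1 (i.1+1) x) := rfl

noncomputable def genAct (i : HIdx (srtSize L)) (T : {p : ℕ → ℕ × ℕ // IsSRT L p}) :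
    {p : ℕ → ℕ × ℕ // IsSRT L p} →₀ ℂ :=
  if h1 : (T.1 (i.1+1)).2 < (T.1 i.1).2 then Finsupp.single T 1
  else if h2 : (T.1 i.1).2 = (T.1 (i.1+1)).2 then 0
  else Finsupp.single (swapT L i T (by omega)) 1

noncomputable def opE (i : HIdx (srtSize L)) :
    Module.End ℂ ({p : ℕ → ℕ × ℕ // IsSRT L p} →₀ ℂ) :=
  Finsupp.lsum ℂ fun T => LinearMap.toSpanSingleton ℂ _ (genAct L i T)

lemma opE_single (i : HIdx (srtSize L)) (T) (c : ℂ) :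
    opE L i (Finsupp.single T c) = c • genAct L i T := by
  simp [opE, LinearMap.toSpanSingleton_apply]

lemma op_above {i : HIdx (srtSize L)} {T} (h : (T.1 (i.1+1)).2 < (T.1 i.1).2) :
    opE L i (Finsupp.single T 1) = Finsupp.single T 1 := by
  rw [opE_single, genAct, dif_pos h, one_smul]

lemma op_level {i : HIdx (srtSize L)} {T} (h : (T.1 i.1).2 = (T.1 (i.1+1)).2) :
    opE L i (Finsupp.single T 1) = 0 := by
  rw [opE_single, genAct, dif_neg (by omega), dif_pos h, smul_zero]

lemma op_below {i : HIdx (srtSize L)} {T} (h : (T.1 i.1).2 < (T.1 (i.1+1)).2) :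
    opE L i (Finsupp.single T 1) = Finsupp.single (swapT L i T h) 1 := by
  rw [opE_single, genAct, dif_neg (by omega), dif_neg (by omega), one_smul]

lemma endo_ext {f g : Module.End ℂ ({p : ℕ → ℕ × ℕ // IsSRT L p} →₀ ℂ)}
    (h : ∀ T, f (Finsupp.single T 1) = g (Finsupp.single T 1)) : f = g := by
  apply Finsupp.lhom_ext
  intro a b
  have hb : (Finsupp.single a b) = b • Finsupp.single a (1:ℂ) := by
    rw [Finsupp.smul_single, smul_eq_mul, mul_one]
  rw [hb, map_smul, map_smul, h]

lemma op_idem (i : HIdx (srtSize L)) : opE L i * opE L i = opE L i := by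
  apply endo_ext
  intro T
  rw [Module.End.mul_apply]
  rcases lt_trichotomy ((T.1 i.1).2) ((T.1 (i.1+1)).2) with hab | hab | hab
  · simp only [op_below L hab,
      op_above L (i := i) (T := swapT L i T hab) (by
        simp only [swapT_apply, Equiv.swap_apply_left, Equiv.swap_apply_right]; exact hab)]
  · simp only [op_level L hab, map_zero]
  · simp only [op_above L hab]

lemma op_comm (i j : HIdx (srtSize L)) (hij : i.1 + 2 ≤ j.1) :
    opE L i * opE L j = opE L j * opE L i := by
  have Efix : ∀ y, y ≠ i.1 → y ≠ i.1+1 → Equiv.swap i.1 (i.1+1) y = y :=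
    fun y h1 h2 => Equiv.swap_apply_of_ne_of_ne h1 h2
  have Ffix : ∀ y, y ≠ j.1 → y ≠ j.1+1 → Equiv.swap j.1 (j.1+1) y = y :=
    fun y h1 h2 => Equiv.swap_apply_of_ne_of_ne h1 h2
  have F1 : Equiv.swap j.1 (j.1+1) i.1 = i.1 := Ffix _ (by omega) (by omega)
  have F2 : Equiv.swap j.1 (j.1+1) (i.1+1) = i.1+1 := Ffix _ (by omega) (by omega)
  have E1 : Equiv.swap i.1 (i.1+1) j.1 = j.1 := Efix _ (by omega) (by omega)
  have E2 : Equiv.swap i.1 (i.1+1) (j.1+1) = j.1+1 := Efix _ (by omega) (by omega)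
  apply endo_ext
  intro T
  rw [Module.End.mul_apply, Module.End.mul_apply]
  rcases lt_trichotomy ((T.1 i.1).2) ((T.1 (i.1+1)).2) with hi | hi | hi <;>
    rcases lt_trichotomy ((T.1 j.1).2) ((T.1 (j.1+1)).2) with hj | hj | hj
  -- i below, j below
  · simp only [op_below L hj, op_below L hi,
      op_below L (i := i) (T := swapT L j T hj) (by simp only [swapT_apply, F1, F2]; exact hi),
      op_below L (i := j) (T := swapT L i T hi) (by simp only [swapT_apply, E1, E2]; exact hj)]
    congr 1
    apply Subtype.ext
    funext x
    simp only [swapT_apply]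
    congr 1
    rcases eq_or_ne x i.1 with rfl | h1
    · rw [Equiv.swap_apply_left, Ffix _ (by omega) (by omega), F1, Equiv.swap_apply_left]
    rcases eq_or_ne x (i.1+1) with rfl | h2
    · rw [Equiv.swap_apply_right, Ffix _ (by omega) (by omega), F2, Equiv.swap_apply_right]
    rcases eq_or_ne x j.1 with rfl | h3
    · rw [Efix _ h1 h2, Equiv.swap_apply_left, Efix _ (by omega) (by omega)]
    rcases eq_or_ne x (j.1+1) with rfl | h4
    · rw [Efix _ h1 h2, Equiv.swap_apply_right, Efix _ (by omega) (by omega)]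
    · rw [Efix _ h1 h2, Ffix _ h3 h4, Efix _ h1 h2]
  -- i below, j level
  · simp only [op_level L hj, map_zero, op_below L hi,
      op_level L (i := j) (T := swapT L i T hi) (by simp only [swapT_apply, E1, E2]; exact hj)]
  -- i below, j above
  · simp only [op_above L hj, op_below L hi,
      op_above L (i := j) (T := swapT L i T hi) (by simp only [swapT_apply, E1, E2]; exact hj)]
  -- i level, j below
  · simp only [op_below L hj, op_level L hi, map_zero,
      op_level L (i := i) (T := swapT L j T hj) (by simp only [swapT_apply, F1, F2]; exact hi)]
  · simp only [op_level L hj, op_level L hi, map_zero]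
  · simp only [op_above L hj, op_level L hi, map_zero]
  -- i above, j below
  · simp only [op_below L hj, op_above L hi,
      op_above L (i := i) (T := swapT L j T hj) (by simp only [swapT_apply, F1, F2]; exact hi)]
  · simp only [op_level L hj, map_zero, op_above L hi]
  · simp only [op_above L hj, op_above L hi]

lemma op_braid (i j : HIdx (srtSize L)) (h : i.1 + 1 = j.1) :
    opE L i * opE L j * opE L i = opE L j * opE L i * opE L j := by
  have Efix : ∀ y, y ≠ i.1 → y ≠ i.1+1 → Equiv.swap i.1 (i.1+1) y = y :=
    fun y h1 h2 => Equiv.swap_apply_of_ne_of_ne h1 h2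
  have Ffix : ∀ y, y ≠ j.1 → y ≠ j.1+1 → Equiv.swap j.1 (j.1+1) y = y :=
    fun y h1 h2 => Equiv.swap_apply_of_ne_of_ne h1 h2
  have hj : j.1 = i.1 + 1 := h.symm
  have E1 : Equiv.swap i.1 (i.1+1) i.1 = i.1+1 := Equiv.swap_apply_left _ _
  have E2 : Equiv.swap i.1 (i.1+1) (i.1+1) = i.1 := Equiv.swap_apply_right _ _
  have E3 : Equiv.swap i.1 (i.1+1) (i.1+2) = i.1+2 := Efix _ (by omega) (by omega)
  have F0 : Equiv.swap j.1 (j.1+1) i.1 = i.1 := Ffix _ (by omega) (by omega)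
  have F1 : Equiv.swap j.1 (j.1+1) (i.1+1) = i.1+2 := by
    rw [hj]; exact Equiv.swap_apply_left _ _
  have F2 : Equiv.swap j.1 (j.1+1) (i.1+2) = i.1+1 := by
    rw [hj]; exact Equiv.swap_apply_right _ _
  apply endo_ext
  intro T
  rw [Module.End.mul_apply, Module.End.mul_apply, Module.End.mul_apply, Module.End.mul_apply]
  rcases lt_trichotomy ((T.1 i.1).2) ((T.1 (i.1+1)).2) with hab | hab | hab
  · -- a < b
    rcases lt_trichotomy ((T.1 (i.1+1)).2) ((T.1 (i.1+2)).2) with hbc | hbc | hbc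
    · -- a < b < c : both sides triple swap
      set T1 := swapT L i T hab with hT1
      have c1 : (T1.1 j.1).2 < (T1.1 (j.1+1)).2 := by
        rw [hj]; simp only [hT1, swapT_apply, E1, E2, E3, F0, F1, F2]; exact lt_trans hab hbc
      set T2 := swapT L j T1 c1 with hT2
      have c2 : (T2.1 i.1).2 < (T2.1 (i.1+1)).2 := by
        simp only [hT2, hT1, swapT_apply, E1, E2, E3, F0, F1, F2]; exact hbc
      set T3 := swapT L i T2 c2 with hT3
      have d1 : (T.1 j.1).2 < (T.1 (j.1+1)).2 := by rw [hj]; exact hbc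
      set S1 := swapT L j T d1 with hS1
      have d2 : (S1.1 i.1).2 < (S1.1 (i.1+1)).2 := by
        simp only [hS1, swapT_apply, E1, E2, E3, F0, F1, F2]; exact lt_trans hab hbc
      set S2 := swapT L i S1 d2 with hS2
      have d3 : (S2.1 j.1).2 < (S2.1 (j.1+1)).2 := by
        rw [hj]; simp only [hS2, hS1, swapT_apply, E1, E2, E3, F0, F1, F2]; exact hab
      set S3 := swapT L j S2 d3 with hS3
      rw [op_below L hab, op_below L (i := j) (T := T1) c1, op_below L (i := i) (T := T2) c2,
        op_below L (i := j) (T := T) d1, op_below L (i := i) (T := S1) d2,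
        op_below L (i := j) (T := S2) d3]
      congr 1
      apply Subtype.ext
      funext x
      simp only [hT3, hT2, hT1, hS3, hS2, hS1, swapT_apply]
      rcases eq_or_ne x i.1 with rfl | h1
      · simp only [E1, E2, E3, F0, F1, F2]
      rcases eq_or_ne x (i.1+1) with rfl | h2
      · simp only [E1, E2, E3, F0, F1, F2]
      rcases eq_or_ne x (i.1+2) with rfl | h3
      · simp only [E1, E2, E3, F0, F1, F2]
      · have G1 : Equiv.swap i.1 (i.1+1) x = x := Efix _ h1 h2
        have G2 : Equiv.swap j.1 (j.1+1) x = x := Ffix _ (by omega) (by omega)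
        simp only [G1, G2]
    · -- a < b = c
      have d1 : (T.1 j.1).2 = (T.1 (j.1+1)).2 := by rw [hj]; exact hbc
      rw [op_level L (i := j) (T := T) d1, map_zero, map_zero, op_below L hab]
      set T1 := swapT L i T hab with hT1
      have c1 : (T1.1 j.1).2 < (T1.1 (j.1+1)).2 := by
        rw [hj]; simp only [hT1, swapT_apply, E1, E2, E3, F0, F1, F2]; omega
      rw [op_below L (i := j) (T := T1) c1]
      set T2 := swapT L j T1 c1 with hT2
      have c2 : (T2.1 i.1).2 = (T2.1 (i.1+1)).2 := by
        simp only [hT2, hT1, swapT_apply, E1, E2, E3, F0, F1, F2]; omega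
      rw [op_level L (i := i) (T := T2) c2]
    · -- a < b > c : compare a and c
      have d1 : (T.1 (j.1+1)).2 < (T.1 j.1).2 := by rw [hj]; exact hbc
      rw [op_above L (i := j) (T := T) d1, op_below L hab]
      set T1 := swapT L i T hab with hT1
      rcases lt_trichotomy ((T.1 i.1).2) ((T.1 (i.1+2)).2) with hac | hac | hac
      · have c1 : (T1.1 j.1).2 < (T1.1 (j.1+1)).2 := by
          rw [hj]; simp only [hT1, swapT_apply, E1, E2, E3, F0, F1, F2]; exact hac
        rw [op_below L (i := j) (T := T1) c1]
        set T2 := swapT L j T1 c1 with hT2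
        have c2 : (T2.1 (i.1+1)).2 < (T2.1 i.1).2 := by
          simp only [hT2, hT1, swapT_apply, E1, E2, E3, F0, F1, F2]; exact hbc
        rw [op_above L (i := i) (T := T2) c2]
      · have c1 : (T1.1 j.1).2 = (T1.1 (j.1+1)).2 := by
          rw [hj]; simp only [hT1, swapT_apply, E1, E2, E3, F0, F1, F2]; exact hac
        rw [op_level L (i := j) (T := T1) c1, map_zero]
      · have c1 : (T1.1 (j.1+1)).2 < (T1.1 j.1).2 := by
          rw [hj]; simp only [hT1, swapT_apply, E1, E2, E3, F0, F1, F2]; exact hac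
        rw [op_above L (i := j) (T := T1) c1,
          op_above L (i := i) (T := T1) (by
            simp only [hT1, swapT_apply, E1, E2, E3, F0, F1, F2]; exact hab)]
  · -- a = b
    rw [op_level L hab, map_zero, map_zero]
    rcases lt_trichotomy ((T.1 (i.1+1)).2) ((T.1 (i.1+2)).2) with hbc | hbc | hbc
    · have d1 : (T.1 j.1).2 < (T.1 (j.1+1)).2 := by rw [hj]; exact hbc
      rw [op_below L (i := j) (T := T) d1]
      set S1 := swapT L j T d1 with hS1
      have d2 : (S1.1 i.1).2 < (S1.1 (i.1+1)).2 := by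
        simp only [hS1, swapT_apply, E1, E2, E3, F0, F1, F2]; omega
      rw [op_below L (i := i) (T := S1) d2]
      set S2 := swapT L i S1 d2 with hS2
      have d3 : (S2.1 j.1).2 = (S2.1 (j.1+1)).2 := by
        rw [hj]; simp only [hS2, hS1, swapT_apply, E1, E2, E3, F0, F1, F2]; omega
      rw [op_level L (i := j) (T := S2) d3]
    · have d1 : (T.1 j.1).2 = (T.1 (j.1+1)).2 := by rw [hj]; exact hbc
      rw [op_level L (i := j) (T := T) d1, map_zero, map_zero]
    · have d1 : (T.1 (j.1+1)).2 < (T.1 j.1).2 := by rw [hj]; exact hbc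
      rw [op_above L (i := j) (T := T) d1, op_level L hab, map_zero]
  · -- a > b
    rw [op_above L hab]
    rcases lt_trichotomy ((T.1 (i.1+1)).2) ((T.1 (i.1+2)).2) with hbc | hbc | hbc
    · -- b < c : compare a and c
      have d1 : (T.1 j.1).2 < (T.1 (j.1+1)).2 := by rw [hj]; exact hbc
      rw [op_below L (i := j) (T := T) d1]
      set S1 := swapT L j T d1 with hS1
      rcases lt_trichotomy ((T.1 i.1).2) ((T.1 (i.1+2)).2) with hac | hac | hac
      · have d2 : (S1.1 i.1).2 < (S1.1 (i.1+1)).2 := by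
          simp only [hS1, swapT_apply, E1, E2, E3, F0, F1, F2]; exact hac
        rw [op_below L (i := i) (T := S1) d2]
        set S2 := swapT L i S1 d2 with hS2
        have d3 : (S2.1 (j.1+1)).2 < (S2.1 j.1).2 := by
          rw [hj]; simp only [hS2, hS1, swapT_apply, E1, E2, E3, F0, F1, F2]; exact hab
        rw [op_above L (i := j) (T := S2) d3]
      · have d2 : (S1.1 i.1).2 = (S1.1 (i.1+1)).2 := by
          simp only [hS1, swapT_apply, E1, E2, E3, F0, F1, F2]; exact hac
        rw [op_level L (i := i) (T := S1) d2, map_zero]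
      · have d2 : (S1.1 (i.1+1)).2 < (S1.1 i.1).2 := by
          simp only [hS1, swapT_apply, E1, E2, E3, F0, F1, F2]; exact hac
        rw [op_above L (i := i) (T := S1) d2,
          op_above L (i := j) (T := S1) (by
            rw [hj]; simp only [hS1, swapT_apply, E1, E2, E3, F0, F1, F2]; exact hbc)]
    · have d1 : (T.1 j.1).2 = (T.1 (j.1+1)).2 := by rw [hj]; exact hbc
      rw [op_level L (i := j) (T := T) d1, map_zero, map_zero]
    · have d1 : (T.1 (j.1+1)).2 < (T.1 j.1).2 := by rw [hj]; exact hbc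
      rw [op_above L (i := j) (T := T) d1, op_above L hab, op_above L (i := j) (T := T) d1]

end Ops

/-- the rules `π_i·T = T` if `i ∉ Des(T)` (i.e. `i` is strictly
above `i+1`: `height(i) > height(i+1)`), `π_i·T = 0` if `i` and `i+1` are in
the same row (`height(i) = height(i+1)`), and `π_i·T = s_i·T` if `i` is strictly
below `i+1` (`height(i) < height(i+1)`), satisfy the defining relations of
`H_n(0)`, i.e. define an `H_n(0)`-module structure on the ℂ-span of the
standard ribbon tableaux of shape `𝛂`. -/
theorem stmt15 (L : List (List ℕ)) (hL : ∀ l ∈ L, l ≠ [] ∧ ∀ x ∈ l, 0 < x) :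
    ∃ act : Hecke0 (srtSize L) →ₐ[ℂ]
        Module.End ℂ ({p : ℕ → ℕ × ℕ // IsSRT L p} →₀ ℂ),
      ∀ i : HIdx (srtSize L), ∀ T : {p : ℕ → ℕ × ℕ // IsSRT L p},
        ((T.1 (i.1 + 1)).2 < (T.1 i.1).2 →
          act (piGen (srtSize L) i) (Finsupp.single T 1) = Finsupp.single T 1) ∧
        ((T.1 i.1).2 = (T.1 (i.1 + 1)).2 →
          act (piGen (srtSize L) i) (Finsupp.single T 1) = 0) ∧
        ((T.1 i.1).2 < (T.1 (i.1 + 1)).2 →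
          ∃ T' : {p : ℕ → ℕ × ℕ // IsSRT L p},
            T'.1 = T.1 ∘ (Equiv.swap i.1 (i.1 + 1)) ∧
            act (piGen (srtSize L) i) (Finsupp.single T 1) = Finsupp.single T' 1) := by
  classical
  refine ⟨RingQuot.liftAlgHom ℂ ⟨FreeAlgebra.lift ℂ (opE L), ?_⟩, ?_⟩
  · intro x y hxy
    induction hxy with
    | idem i => simp only [map_mul, FreeAlgebra.lift_ι_apply, op_idem]
    | braid i j hb => simp only [map_mul, FreeAlgebra.lift_ι_apply, op_braid L i j hb]
    | comm i j hc => simp only [map_mul, FreeAlgebra.lift_ι_apply, op_comm L i j hc]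
  · intro i T
    have hact : ∀ v, (RingQuot.liftAlgHom ℂ
        ⟨FreeAlgebra.lift ℂ (opE L), by
          intro x y hxy
          induction hxy with
          | idem i => simp only [map_mul, FreeAlgebra.lift_ι_apply, op_idem]
          | braid i j hb => simp only [map_mul, FreeAlgebra.lift_ι_apply, op_braid L i j hb]
          | comm i j hc => simp only [map_mul, FreeAlgebra.lift_ι_apply, op_comm L i j hc]⟩)
        (piGen (srtSize L) i) v = opE L i v := by
      intro v
      rw [piGen, RingQuot.liftAlgHom_mkAlgHom_apply, FreeAlgebra.lift_ι_apply]
    refine ⟨fun h => ?_, fun h => ?_, fun h => ?_⟩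
    · rw [hact, op_above L h]
    · rw [hact, op_level L h]
    · exact ⟨swapT L i T h, rfl, by rw [hact, op_below L h]⟩
end

section
/- For standard ribbon tableaux T₁, T₂ of the same generalized composition shape 𝛂, define T₁ ≤ T₂ iff T₂ = π_σ · T₁ for some σ ∈ S_n (under the H_n(0)-action on SRTx). Then ≤ is a partial order on the set of SRTx of shape 𝛂, and the source tableau T_𝛂 (filled with 1,...,n down each column from left to right, i.e., column by column top to bottom) is its unique minimum. -/
/-- One application of a generator `π_i` (`1 ≤ i ≤ n-1`) sending the basis
element `T` to the basis element `T'` (not to `0`): either `i ∉ Des(T)`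
(`i` strictly above `i+1`, i.e. `height(i+1) < height(i)`) and `T' = T`, or `i`
is strictly below `i+1` and `T'` is obtained from `T` by swapping `i` and `i+1`. -/
def srtStep (L : List (List ℕ))
    (T T' : {p : ℕ → ℕ × ℕ // IsSRT L p}) : Prop :=
  ∃ i : ℕ, 1 ≤ i ∧ i + 1 ≤ srtSize L ∧
    (((T.1 (i + 1)).2 < (T.1 i).2 ∧ T' = T) ∨
     ((T.1 i).2 < (T.1 (i + 1)).2 ∧ T'.1 = T.1 ∘ (Equiv.swap i (i + 1))))

/-- `T ≤ T'` iff `T' = π_σ · T` for some `σ ∈ S_n`. -/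
def srtLe (L : List (List ℕ)) :
    {p : ℕ → ℕ × ℕ // IsSRT L p} → {p : ℕ → ℕ × ℕ // IsSRT L p} → Prop :=
  Relation.ReflTransGen (srtStep L)

/-- `T` is the source tableau `T_𝛂`: the diagram is filled with `1, 2, …, n`
going down each column, columns taken from left to right (smaller column first;
within a column, larger height first). -/
def IsSourceSRT (L : List (List ℕ)) (T : {p : ℕ → ℕ × ℕ // IsSRT L p}) : Prop :=
  ∀ a ∈ Set.Icc 1 (srtSize L), ∀ b ∈ Set.Icc 1 (srtSize L),
    ((T.1 a).1 < (T.1 b).1 ∨ ((T.1 a).1 = (T.1 b).1 ∧ (T.1 b).2 < (T.1 a).2)) →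
    a < b

/-!
Read the cells of the diagram column by column, left to right, each column from top to bottom;
the source tableau is the unique SRT filling them in this reading order.

A step `π_i` that changes a tableau moves `i` from below `i + 1` to above it, so the weight
`∑ e * height(e)` strictly decreases along such steps; this makes `≤` antisymmetric. Conversely,
if `T` is not the source, some `i + 1` is read before `i`. Since cells of a generalized ribbon
diagram never descend from left to right, `i + 1` then lies strictly below `i` in an earlier
column, so swapping them gives an SRT `U` with `π_i · U = T` and larger weight. The weight is
bounded, and induction on it gives `T_𝛂 ≤ T`.
-/

open Set Function

namespace List

lemma sum_take_mono (l : List ℕ) : Monotone fun j => (l.take j).sum :=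
  fun _ _ h => (take_prefix_take_left h).sublist.sum_le_sum fun _ _ => Nat.zero_le _

lemma sum_take_succ_eq_add_getD {M : Type*} [AddMonoid M] (l : List M) (j : ℕ) :
    (l.take (j + 1)).sum = (l.take j).sum + l.getD j 0 := by
  rcases lt_or_ge j l.length with hj | hj
  · rw [sum_take_succ _ _ hj, getD_eq_getElem]
  · simp [take_of_length_le, hj, Nat.le_succ_of_le hj]

lemma sum_take_add_sub_le {l : List ℕ} (hl : ∀ x ∈ l, 0 < x) {a b : ℕ} (hab : a ≤ b)
    (hb : b ≤ l.length) : (l.take a).sum + (b - a) ≤ (l.take b).sum := by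
  have hsplit := sum_take_add_sum_drop (l.take b) a
  rw [take_take, min_eq_left hab] at hsplit
  have hdrop := length_le_sum_of_one_le ((l.take b).drop a)
    fun x hx => hl x (mem_of_mem_take (mem_of_mem_drop hx))
  simp only [length_drop, length_take, min_eq_left hb] at hdrop
  omega

lemma map_range_getD {β γ : Type*} (l : List β) (d : β) (f : β → γ) :
    (range l.length).map (fun j => f (l.getD j d)) = l.map f :=
  ext_getElem (by simp) fun j _ hj => by
    simp [getElem?_eq_getElem (length_map f ▸ hj)]

end List

theorem StrictMonoOn.eqOn_of_bijOn {α β : Type*} [LinearOrder α] [WellFoundedLT α]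
    [LinearOrder β] {s : Set α} {t : Set β} {f g : α → β} (hf : StrictMonoOn f s)
    (hg : StrictMonoOn g s) (hfb : BijOn f s t) (hgb : BijOn g s t) : EqOn f g s := by
  intro a ha
  induction a using WellFoundedLT.induction with
  | _ a ih =>
    have hnlt : ∀ {φ ψ : α → β}, StrictMonoOn ψ s → BijOn φ s t → BijOn ψ s t →
        (∀ b ∈ s, b < a → φ b = ψ b) → ¬ φ a < ψ a := by
      intro φ ψ hψ hφb hψb heq hlt
      obtain ⟨b, hb, hba⟩ := hψb.surjOn (hφb.mapsTo ha)
      have hb_lt : b < a := (hψ.lt_iff_lt hb ha).1 (hba ▸ hlt)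
      exact hb_lt.ne (hφb.injOn hb ha ((heq b hb hb_lt).trans hba))
    exact le_antisymm (not_lt.1 (hnlt hf hgb hfb fun b hb hba => (ih b hba hb).symm))
      (not_lt.1 (hnlt hg hfb hgb fun b hb hba => ih b hba hb))

/-- The reading order of the cells: columns from left to right, heights reversed. -/
def cellKey (c : ℕ × ℕ) : ℕ ×ₗ ℕᵒᵈ := toLex (c.1, OrderDual.toDual c.2)

lemma cellKey_lt_cellKey {x y : ℕ × ℕ} :
    cellKey x < cellKey y ↔ x.1 < y.1 ∨ x.1 = y.1 ∧ y.2 < x.2 :=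
  Prod.Lex.toLex_lt_toLex

lemma cellKey_injective : Injective cellKey := fun x y h => by
  simpa [cellKey, Prod.ext_iff] using h

section Tableaux

variable {L : List (List ℕ)}

lemma isSourceSRT_iff {T : {p : ℕ → ℕ × ℕ // IsSRT L p}} :
    IsSourceSRT L T ↔ StrictMonoOn (cellKey ∘ T.1) (Icc 1 (srtSize L)) := by
  refine ⟨fun hT a ha b hb hab => ?_, fun hT a ha b hb h => ?_⟩
  · rcases lt_trichotomy (cellKey (T.1 a)) (cellKey (T.1 b)) with h | h | h
    · exact h
    · exact absurd (T.2.1.injOn ha hb (cellKey_injective h)) hab.ne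
    · exact absurd (hT b hb a ha (cellKey_lt_cellKey.1 h)) hab.not_gt
  · exact (hT.lt_iff_lt ha hb).1 (cellKey_lt_cellKey.2 h)

lemma IsSourceSRT.eq {T U : {p : ℕ → ℕ × ℕ // IsSRT L p}} (hT : IsSourceSRT L T)
    (hU : IsSourceSRT L U) : T = U := by
  have hbij : ∀ V : {p : ℕ → ℕ × ℕ // IsSRT L p},
      BijOn (cellKey ∘ V.1) (Icc 1 (srtSize L)) (cellKey '' gribbonCells L) :=
    fun V => cellKey_injective.injOn.bijOn_image.comp V.2.1
  have heq := (isSourceSRT_iff.1 hT).eqOn_of_bijOn (isSourceSRT_iff.1 hU) (hbij T) (hbij U)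
  refine Subtype.ext (funext fun e => ?_)
  by_cases he : e ∈ Icc 1 (srtSize L)
  · exact cellKey_injective (heq he)
  · rw [T.2.2.2.2 e he, U.2.2.2.2 e he]

lemma isSRT_of_strictMonoOn {p : ℕ → ℕ × ℕ}
    (hbij : BijOn p (Icc 1 (srtSize L)) (gribbonCells L))
    (hmono : StrictMonoOn (cellKey ∘ p) (Icc 1 (srtSize L)))
    (hout : ∀ e ∉ Icc 1 (srtSize L), p e = (0, 0)) : IsSRT L p :=
  ⟨hbij, fun _ ha _ hb _ hcol => (hmono.lt_iff_lt ha hb).1 (cellKey_lt_cellKey.2 (.inl hcol)),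
    fun _ ha _ hb hcol hrow =>
      (hmono.lt_iff_lt ha hb).1 (cellKey_lt_cellKey.2 (.inr ⟨hcol, hrow⟩)), hout⟩

lemma exists_isSourceSRT_of_list {l : List (ℕ × ℕ)} (hmem : ∀ c, c ∈ l ↔ c ∈ gribbonCells L)
    (hlen : l.length = srtSize L) (hsorted : l.Pairwise fun x y => cellKey x < cellKey y) :
    ∃ T, IsSourceSRT L T := by
  classical
  let p : ℕ → ℕ × ℕ := fun e => if e ∈ Icc 1 (srtSize L) then l.getD (e - 1) (0, 0) else (0, 0)
  have hp : ∀ e (he : e ∈ Icc 1 (srtSize L)), p e = l[e - 1]'(by rw [hlen]; grind) := by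
    intro e he
    simp only [p, if_pos he]
    exact List.getD_eq_getElem _ _ _
  have hmono : StrictMonoOn (cellKey ∘ p) (Icc 1 (srtSize L)) := by
    intro a ha b hb hab
    simp only [comp_apply, hp a ha, hp b hb]
    exact List.pairwise_iff_getElem.1 hsorted _ _ _ _ (by grind)
  have hbij : BijOn p (Icc 1 (srtSize L)) (gribbonCells L) := by
    refine ⟨fun e he => (hmem _).1 (hp e he ▸ List.getElem_mem _), hmono.injOn.of_comp, ?_⟩
    intro c hc
    obtain ⟨k, hk, rfl⟩ := List.mem_iff_getElem.1 ((hmem c).2 hc)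
    exact ⟨k + 1, by grind, by rw [hp _ (by grind)]; rfl⟩
  have hSRT := isSRT_of_strictMonoOn hbij hmono fun e he => if_neg he
  exact ⟨⟨p, hSRT⟩, isSourceSRT_iff.2 hmono⟩

end Tableaux

section Ribbon

variable {α : List ℕ}

def ribbonList (α : List ℕ) : List (ℕ × ℕ) :=
  (List.range α.length).flatMap fun j =>
    (List.range (α.getD j 0)).map fun t => (j, (α.take (j + 1)).sum - (j + 1) - t)

lemma mem_ribbonList (hα : ∀ x ∈ α, 0 < x) {c : ℕ × ℕ} :
    c ∈ ribbonList α ↔ c ∈ ribbonCells α := by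
  obtain ⟨j, h⟩ := c
  simp only [ribbonList, List.mem_flatMap, List.mem_range, List.mem_map, ribbonCells,
    mem_ofPred_eq, Prod.mk.injEq]
  have hsum := List.sum_take_succ_eq_add_getD α
  constructor
  · rintro ⟨j, hj, t, ht, rfl, rfl⟩
    have := List.sum_take_add_sub_le hα (Nat.zero_le j) hj.le
    grind
  · rintro ⟨hj, hlo, hhi⟩
    have := List.sum_take_add_sub_le hα (Nat.zero_le j) hj.le
    exact ⟨j, hj, (α.take (j + 1)).sum - (j + 1) - h, by grind, rfl, by grind⟩

lemma length_ribbonList (α : List ℕ) : (ribbonList α).length = α.sum := by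
  simp only [ribbonList, List.length_flatMap, List.length_map, List.length_range]
  simpa using congrArg List.sum (List.map_range_getD α 0 id)

lemma pairwise_ribbonList (hα : ∀ x ∈ α, 0 < x) :
    (ribbonList α).Pairwise fun x y => cellKey x < cellKey y := by
  simp only [ribbonList, List.pairwise_flatMap, List.mem_range, List.pairwise_map,
    List.mem_map, cellKey_lt_cellKey]
  refine ⟨fun j hj => ?_, List.pairwise_lt_range.imp ?_⟩
  · have := List.sum_take_add_sub_le hα (Nat.zero_le j) hj.le
    have := List.sum_take_succ_eq_add_getD α j
    exact List.pairwise_lt_range.imp_of_mem fun {s t} _ ht hst => by grind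
  · rintro j j' hjj' _ ⟨t, -, rfl⟩ _ ⟨t', -, rfl⟩
    exact .inl hjj'

lemma ribbonCells_snd_add_length_le_sum (hα : ∀ x ∈ α, 0 < x) {c : ℕ × ℕ} (hc : c ∈ ribbonCells α) :
    c.2 + α.length ≤ α.sum := by
  obtain ⟨hj, -, hhi⟩ := hc
  have := List.sum_take_add_sub_le hα hj (le_refl _)
  have := List.sum_take_add_sub_le hα (Nat.zero_le c.1) hj.le
  rw [List.take_length] at *
  grind [List.sum_take_succ_eq_add_getD]

lemma ribbonCells_snd_le_of_fst_lt (hα : ∀ x ∈ α, 0 < x) {c c' : ℕ × ℕ}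
    (hc : c ∈ ribbonCells α) (hc' : c' ∈ ribbonCells α) (h : c'.1 < c.1) : c'.2 ≤ c.2 := by
  obtain ⟨hj, hlo, -⟩ := hc
  obtain ⟨hj', -, hhi'⟩ := hc'
  have := List.sum_take_add_sub_le hα h hj.le
  have := List.sum_take_add_sub_le hα (Nat.zero_le c'.1) hj'.le
  grind [List.sum_take_succ_eq_add_getD]

end Ribbon

section GeneralizedRibbon

variable {L : List (List ℕ)}

lemma colOff_succ (L : List (List ℕ)) (m : ℕ) :
    colOff L (m + 1) = colOff L m + (L.getD m []).length := by
  rw [colOff, colOff, List.map_take, List.map_take, List.sum_take_succ_eq_add_getD]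
  rcases lt_or_ge m L.length with hm | hm <;> simp [hm]

lemma htOff_succ {m : ℕ} (hm : m < L.length) :
    htOff L (m + 1) = htOff L m + ((L.getD m []).sum - (L.getD m []).length + 1) := by
  rw [htOff, htOff, List.map_take, List.map_take, List.sum_take_succ_eq_add_getD]
  simp [hm]

lemma colOff_mono (L : List (List ℕ)) : Monotone (colOff L) :=
  fun _ _ h => by simpa only [colOff, List.map_take] using List.sum_take_mono _ h

lemma htOff_mono (L : List (List ℕ)) : Monotone (htOff L) :=
  fun _ _ h => by simpa only [htOff, List.map_take] using List.sum_take_mono _ h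

lemma pos_of_mem_getD (hL : ∀ l ∈ L, ∀ x ∈ l, 0 < x) {m : ℕ} (hm : m < L.length) :
    ∀ x ∈ L.getD m [], 0 < x :=
  hL _ (List.getD_eq_getElem L [] hm ▸ List.getElem_mem hm)

def gribbonList (L : List (List ℕ)) : List (ℕ × ℕ) :=
  (List.range L.length).flatMap fun m =>
    (ribbonList (L.getD m [])).map fun c => (colOff L m + c.1, htOff L m + c.2)

lemma mem_gribbonList (hL : ∀ l ∈ L, ∀ x ∈ l, 0 < x) {c : ℕ × ℕ} :
    c ∈ gribbonList L ↔ c ∈ gribbonCells L := by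
  simp only [gribbonList, List.mem_flatMap, List.mem_range, List.mem_map, gribbonCells,
    mem_ofPred_eq]
  refine exists_congr fun m => and_congr_right fun hm => ?_
  simp only [mem_ribbonList (pos_of_mem_getD hL hm), eq_comm]

lemma length_gribbonList (L : List (List ℕ)) : (gribbonList L).length = srtSize L := by
  simp only [gribbonList, List.length_flatMap, List.length_map, length_ribbonList, srtSize]
  exact congrArg List.sum (List.map_range_getD L [] List.sum)

lemma pairwise_gribbonList (hL : ∀ l ∈ L, ∀ x ∈ l, 0 < x) :
    (gribbonList L).Pairwise fun x y => cellKey x < cellKey y := by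
  simp only [gribbonList, List.pairwise_flatMap, List.mem_range, List.pairwise_map,
    List.mem_map, cellKey_lt_cellKey]
  refine ⟨fun m hm => ?_, List.pairwise_lt_range.imp_of_mem ?_⟩
  · refine (pairwise_ribbonList (pos_of_mem_getD hL hm)).imp fun h => ?_
    simp only [cellKey_lt_cellKey] at h
    omega
  · rintro m m' hm - hmm' _ ⟨c, hc, rfl⟩ _ ⟨c', -, rfl⟩
    have := ((mem_ribbonList (pos_of_mem_getD hL (List.mem_range.1 hm))).1 hc).1
    have := colOff_mono L (show m + 1 ≤ m' from hmm')
    have := colOff_succ L m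
    exact .inl (by omega)

lemma gribbonCells_snd_le_of_fst_lt (hL : ∀ l ∈ L, ∀ x ∈ l, 0 < x) {x y : ℕ × ℕ}
    (hx : x ∈ gribbonCells L) (hy : y ∈ gribbonCells L) (h : y.1 < x.1) : y.2 ≤ x.2 := by
  obtain ⟨m, hm, c, hc, rfl⟩ := hx
  obtain ⟨m', hm', c', hc', rfl⟩ := hy
  dsimp only at h ⊢
  rcases lt_trichotomy m' m with hmm | rfl | hmm
  · have := ribbonCells_snd_add_length_le_sum (pos_of_mem_getD hL hm') hc'
    have := htOff_succ hm'
    have := htOff_mono L (show m' + 1 ≤ m from hmm)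
    omega
  · have := colOff_succ L m'
    exact Nat.add_le_add_left
      (ribbonCells_snd_le_of_fst_lt (pos_of_mem_getD hL hm) hc hc' (by omega)) _
  · have := hc.1
    have := colOff_succ L m
    have := colOff_mono L (show m + 1 ≤ m' from hmm)
    omega

lemma exists_isSourceSRT (hL : ∀ l ∈ L, ∀ x ∈ l, 0 < x) : ∃ T, IsSourceSRT L T :=
  exists_isSourceSRT_of_list (fun _ => mem_gribbonList hL) (length_gribbonList L)
    (pairwise_gribbonList hL)

lemma finite_gribbonCells (hL : ∀ l ∈ L, ∀ x ∈ l, 0 < x) : (gribbonCells L).Finite :=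
  (gribbonList L).finite_toSet.subset fun _ hc => (mem_gribbonList hL).2 hc

end GeneralizedRibbon

section Swap

open Equiv

lemma swap_add_one_lt_swap_add_one_iff {i a b : ℕ} (hab : ¬(a = i ∧ b = i + 1))
    (hba : ¬(a = i + 1 ∧ b = i)) : swap i (i + 1) a < swap i (i + 1) b ↔ a < b := by
  simp only [swap_apply_def]
  split_ifs <;> omega

lemma lt_of_comp_swap {P : ℕ → ℕ → Prop} {s : Set ℕ} {i : ℕ} (hi : ¬P i (i + 1))
    (hs : MapsTo (swap i (i + 1)) s s) (hP : ∀ a ∈ s, ∀ b ∈ s, P a b → a < b) :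
    ∀ a ∈ s, ∀ b ∈ s, P (swap i (i + 1) a) (swap i (i + 1) b) → a < b := by
  intro a ha b hb h
  by_cases hab : a = i ∧ b = i + 1
  · omega
  by_cases hba : a = i + 1 ∧ b = i
  · obtain ⟨rfl, rfl⟩ := hba
    rw [swap_apply_right, swap_apply_left] at h
    exact absurd h hi
  exact (swap_add_one_lt_swap_add_one_iff hab hba).1 (hP _ (hs ha) _ (hs hb) h)

variable {L : List (List ℕ)}

lemma isSRT_comp_swap {p : ℕ → ℕ × ℕ} (hp : IsSRT L p) {i : ℕ} (h1 : 1 ≤ i)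
    (h2 : i + 1 ≤ srtSize L) (hrow : (p i).2 ≠ (p (i + 1)).2) (hcol : (p i).1 ≠ (p (i + 1)).1) :
    IsSRT L (p ∘ swap i (i + 1)) := by
  have hbij := bijOn_swap (s := Icc 1 (srtSize L)) (mem_Icc.2 ⟨h1, by omega⟩)
    (mem_Icc.2 ⟨by omega, h2⟩)
  refine ⟨hp.1.comp hbij, ?_, ?_, fun e he => ?_⟩
  · have := lt_of_comp_swap (P := fun a b => (p a).2 = (p b).2 ∧ (p a).1 < (p b).1)
      (fun h => hrow h.1) hbij.mapsTo fun a ha b hb h => hp.2.1 a ha b hb h.1 h.2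
    exact fun a ha b hb hr hc => this a ha b hb ⟨hr, hc⟩
  · have := lt_of_comp_swap (P := fun a b => (p a).1 = (p b).1 ∧ (p b).2 < (p a).2)
      (fun h => hcol h.1) hbij.mapsTo fun a ha b hb h => hp.2.2.1 a ha b hb h.1 h.2
    exact fun a ha b hb hc hr => this a ha b hb ⟨hc, hr⟩
  · rw [mem_Icc] at he
    rw [comp_apply, swap_apply_of_ne_of_ne (by omega) (by omega)]
    exact hp.2.2.2 e (by rwa [mem_Icc])

lemma sum_mul_comp_swap_lt {s : Finset ℕ} {f : ℕ → ℕ} {i : ℕ} (hi : i ∈ s) (hi' : i + 1 ∈ s)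
    (hf : f i < f (i + 1)) : ∑ e ∈ s, e * f (swap i (i + 1) e) < ∑ e ∈ s, e * f e := by
  have hsub : {i, i + 1} ⊆ s := Finset.insert_subset hi (Finset.singleton_subset_iff.2 hi')
  have hsplit : ∀ g : ℕ → ℕ, ∑ e ∈ s, e * g e =
      ∑ e ∈ s \ {i, i + 1}, e * g e + (i * g i + (i + 1) * g (i + 1)) := fun g => by
    rw [← Finset.sum_sdiff hsub, Finset.sum_pair (by omega)]
  rw [hsplit, hsplit f]
  have hfix : ∀ e ∈ s \ {i, i + 1}, e * f (swap i (i + 1) e) = e * f e := fun e he => by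
    simp only [Finset.mem_sdiff, Finset.mem_insert, Finset.mem_singleton, not_or] at he
    rw [swap_apply_of_ne_of_ne he.2.1 he.2.2]
  rw [Finset.sum_congr rfl hfix, swap_apply_left, swap_apply_right]
  nlinarith

end Swap

section Order

open Equiv

variable {L : List (List ℕ)} {T U : {p : ℕ → ℕ × ℕ // IsSRT L p}}

def heightWeight (n : ℕ) (p : ℕ → ℕ × ℕ) : ℕ := ∑ e ∈ Finset.Icc 1 n, e * (p e).2

lemma heightWeight_comp_swap_lt {n i : ℕ} {p : ℕ → ℕ × ℕ} (h1 : 1 ≤ i) (h2 : i + 1 ≤ n)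
    (hlt : (p i).2 < (p (i + 1)).2) : heightWeight n (p ∘ swap i (i + 1)) < heightWeight n p :=
  sum_mul_comp_swap_lt (f := fun e => (p e).2) (Finset.mem_Icc.2 ⟨h1, by omega⟩)
    (Finset.mem_Icc.2 ⟨by omega, h2⟩) hlt

lemma srtStep.eq_or_heightWeight_lt (h : srtStep L T U) :
    U = T ∨ heightWeight (srtSize L) U.1 < heightWeight (srtSize L) T.1 := by
  obtain ⟨i, h1, h2, ⟨-, rfl⟩ | ⟨hlt, hU⟩⟩ := h
  · exact .inl rfl
  · exact .inr (hU ▸ heightWeight_comp_swap_lt h1 h2 hlt)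

lemma srtLe.heightWeight_le (h : srtLe L T U) :
    heightWeight (srtSize L) U.1 ≤ heightWeight (srtSize L) T.1 := by
  induction h with
  | refl => rfl
  | tail _ hstep ih =>
    rcases hstep.eq_or_heightWeight_lt with rfl | hlt
    · exact ih
    · exact hlt.le.trans ih

lemma srtLe.eq_of_heightWeight_le (h : srtLe L T U)
    (hw : heightWeight (srtSize L) T.1 ≤ heightWeight (srtSize L) U.1) : T = U := by
  induction h with
  | refl => rfl
  | tail hTV hstep ih =>
    rcases hstep.eq_or_heightWeight_lt with rfl | hlt
    · exact ih hw
    · exact absurd (hw.trans_lt hlt) (not_lt.2 (srtLe.heightWeight_le hTV))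

lemma srtLe_antisymm (hTU : srtLe L T U) (hUT : srtLe L U T) : T = U :=
  hTU.eq_of_heightWeight_le hUT.heightWeight_le

lemma exists_swap_of_not_isSourceSRT (hL : ∀ l ∈ L, ∀ x ∈ l, 0 < x)
    (hT : ¬IsSourceSRT L T) : ∃ i, 1 ≤ i ∧ i + 1 ≤ srtSize L ∧
      (T.1 (i + 1)).2 < (T.1 i).2 ∧ (T.1 i).1 ≠ (T.1 (i + 1)).1 := by
  contrapose! hT
  refine isSourceSRT_iff.2 (strictMonoOn_of_lt_add_one ordConnected_Icc fun i _ hi hi1 => ?_)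
  have hinj := T.2.1.injOn hi hi1
  have hrow := T.2.2.1 (i + 1) hi1 i hi
  have hcol := T.2.2.2.1 (i + 1) hi1 i hi
  have hleft := gribbonCells_snd_le_of_fst_lt hL (T.2.1.mapsTo hi) (T.2.1.mapsTo hi1)
  have := hT i (mem_Icc.1 hi).1 (mem_Icc.1 hi1).2
  rw [comp_apply, comp_apply, cellKey_lt_cellKey]
  rw [Prod.ext_iff] at hinj
  grind

lemma exists_heightWeight_bound (hL : ∀ l ∈ L, ∀ x ∈ l, 0 < x) :
    ∃ B, ∀ T : {p : ℕ → ℕ × ℕ // IsSRT L p}, heightWeight (srtSize L) T.1 ≤ B := by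
  obtain ⟨H, hH⟩ := ((finite_gribbonCells hL).image Prod.snd).bddAbove
  exact ⟨∑ e ∈ Finset.Icc 1 (srtSize L), e * H, fun T => Finset.sum_le_sum fun e he =>
    Nat.mul_le_mul_left e (hH ⟨_, T.2.1.mapsTo (Finset.coe_Icc 1 _ ▸ he), rfl⟩)⟩

lemma srtLe_of_isSourceSRT (hL : ∀ l ∈ L, ∀ x ∈ l, 0 < x)
    {T₀ : {p : ℕ → ℕ × ℕ // IsSRT L p}} (hT₀ : IsSourceSRT L T₀)
    (T : {p : ℕ → ℕ × ℕ // IsSRT L p}) : srtLe L T₀ T := by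
  obtain ⟨B, hB⟩ := exists_heightWeight_bound hL
  induction T using (measure fun U : {p : ℕ → ℕ × ℕ // IsSRT L p} =>
      B - heightWeight (srtSize L) U.1).wf.induction with
  | _ T ih =>
  by_cases hT : IsSourceSRT L T
  · exact hT₀.eq hT ▸ .refl
  obtain ⟨i, h1, h2, hlt, hcol⟩ := exists_swap_of_not_isSourceSRT hL hT
  let U : {p : ℕ → ℕ × ℕ // IsSRT L p} :=
    ⟨T.1 ∘ swap i (i + 1), isSRT_comp_swap T.2 h1 h2 hlt.ne' hcol⟩
  have hU : T.1 = U.1 ∘ swap i (i + 1) := by ext1 e; simp [U]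
  have hUlt : (U.1 i).2 < (U.1 (i + 1)).2 := by simpa [U] using hlt
  have hstep : srtStep L U T := ⟨i, h1, h2, .inr ⟨hUlt, hU⟩⟩
  have hw := hU ▸ heightWeight_comp_swap_lt h1 h2 hUlt
  exact (ih U (by have := hB U; show B - _ < B - _; omega)).tail hstep

end Order

/-- the relation `T ≤ T' ⟺ T' = π_σ · T` for some `σ ∈ S_n` is a
partial order on the standard ribbon tableaux of shape `𝛂`, and the source
tableau `T_𝛂` is its unique minimum. -/
theorem stmt18 (L : List (List ℕ)) (hL : ∀ l ∈ L, l ≠ [] ∧ ∀ x ∈ l, 0 < x) :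
    (∀ T, srtLe L T T) ∧
    (∀ T U V, srtLe L T U → srtLe L U V → srtLe L T V) ∧
    (∀ T U, srtLe L T U → srtLe L U T → T = U) ∧
    (∃ T₀, IsSourceSRT L T₀) ∧
    (∀ T₀, IsSourceSRT L T₀ → ∀ T, srtLe L T₀ T) := by
  have hpos : ∀ l ∈ L, ∀ x ∈ l, 0 < x := fun l hl => (hL l hl).2
  exact ⟨fun _ => .refl, fun _ _ _ => Relation.ReflTransGen.trans, fun _ _ => srtLe_antisymm,
    exists_isSourceSRT hpos, fun _ hT₀ => srtLe_of_isSourceSRT hpos hT₀⟩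
end
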